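/- arXiv:1605.08640 — 5 statements merged into one kernel-verified Lean document; each statement's English description precedes it below -/
import Mathlib

section
/- Let (S,+,□,∂) be an arithmetical semiring. Then for each n ≥ 2: Σ_{r=2}^{⌈√n⌉−1, r ∣ n} S□(r)·S□(n/r) ≤ S⁺(n) − S□(n) − C(n), where C(n) = binom(S□(√n), 2) if n is a perfect square and 0 otherwise. -/
/-!
If `a, b` are multiplicative primes, `a * b` is an additive prime that is not a multiplicative
prime, and unique factorization of `a * b` recovers the unordered pair `{a, b}`; in particular
the smaller of the degrees of `a` and `b` is determined by the product. So the products `a * b`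
with `∂a = r < ∂b = n / r`, for the divisors `r < √n` of `n`, and the products of two distinct
primes of degree `√n` are pairwise distinct additive primes of degree `n` that are not
multiplicative primes, and counting them gives the inequality.
-/

/-- Number of elements of degree `n`. -/
noncomputable def cntAll {S : Type*} (deg : S → ℕ) (n : ℕ) : ℕ :=
  Nat.card {x : S // deg x = n}

/-- Number of elements of degree `n` lying in the set `P`. -/
noncomputable def cntIn {S : Type*} (deg : S → ℕ) (P : Set S) (n : ℕ) : ℕ :=
  Nat.card {x : S // deg x = n ∧ x ∈ P}

open Finset

section TwoPrimeFactorizations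

variable {M : Type*} [CommMonoid M]

def UniqueFactorizationOfPairProducts (Sq : Set M) : Prop :=
  ∀ a ∈ Sq, ∀ b ∈ Sq, ∃! f : Sq →₀ ℕ, a * b = f.prod fun q n => (q : M) ^ n

variable {Sq : Set M}

lemma prod_pow_single_add_single (a b : Sq) :
    (Finsupp.single a 1 + Finsupp.single b 1).prod (fun q n => (q : M) ^ n) = (a : M) * b := by
  classical
  rw [Finsupp.prod_add_index' (fun _ => pow_zero _) (fun _ _ _ => pow_add _ _ _)]
  simp

lemma eq_and_eq_or_eq_and_eq_of_mul_eq_mul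
    (hfree : UniqueFactorizationOfPairProducts Sq)
    {a b c d : M} (ha : a ∈ Sq) (hb : b ∈ Sq) (hc : c ∈ Sq) (hd : d ∈ Sq) (h : a * b = c * d) :
    (a = c ∧ b = d) ∨ (a = d ∧ b = c) := by
  obtain ⟨f, -, huniq⟩ := hfree a ha b hb
  have key := (huniq _ (prod_pow_single_add_single ⟨a, ha⟩ ⟨b, hb⟩).symm).trans
    (huniq _ (h.trans (prod_pow_single_add_single ⟨c, hc⟩ ⟨d, hd⟩).symm)).symm
  rw [Finsupp.single_add_single_eq_single_add_single one_ne_zero one_ne_zero] at key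
  rcases key with ⟨hac, hbd⟩ | ⟨-, had, hbc⟩ | ⟨h2, -⟩
  · exact .inl ⟨congrArg Subtype.val hac, congrArg Subtype.val hbd⟩
  · exact .inr ⟨congrArg Subtype.val had, congrArg Subtype.val hbc⟩
  · exact absurd h2 two_ne_zero

lemma mul_notMem
    (hfree : UniqueFactorizationOfPairProducts Sq)
    {a b : M} (ha : a ∈ Sq) (hb : b ∈ Sq) : a * b ∉ Sq := by
  intro hab
  obtain ⟨f, -, huniq⟩ := hfree a ha b hb
  have key := (huniq _ (prod_pow_single_add_single ⟨a, ha⟩ ⟨b, hb⟩).symm).trans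
    (huniq (Finsupp.single ⟨a * b, hab⟩ 1) (by simp)).symm
  simpa using congrArg Finsupp.degree key

lemma deg_eq_of_mul_eq_mul (deg : M → ℕ)
    (hfree : UniqueFactorizationOfPairProducts Sq)
    {a b c d : M} (ha : a ∈ Sq) (hb : b ∈ Sq) (hc : c ∈ Sq) (hd : d ∈ Sq)
    (hab : deg a ≤ deg b) (hcd : deg c ≤ deg d) (h : a * b = c * d) : deg a = deg c := by
  rcases eq_and_eq_or_eq_and_eq_of_mul_eq_mul hfree ha hb hc hd h with ⟨rfl, -⟩ | ⟨rfl, rfl⟩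
  · rfl
  · exact le_antisymm hab hcd

lemma card_image_mul_product [DecidableEq M]
    (hfree : UniqueFactorizationOfPairProducts Sq)
    {A B : Finset M} (hA : ↑A ⊆ Sq) (hB : ↑B ⊆ Sq) (hAB : Disjoint A B) :
    ((A ×ˢ B).image fun p => p.1 * p.2).card = A.card * B.card := by
  rw [card_image_of_injOn, card_product]
  rintro ⟨a, b⟩ hab ⟨c, d⟩ hcd h
  simp only [coe_product, Set.mem_prod, mem_coe] at hab hcd
  rcases eq_and_eq_or_eq_and_eq_of_mul_eq_mul hfree (hA hab.1) (hB hab.2) (hA hcd.1) (hB hcd.2) h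
    with ⟨rfl, rfl⟩ | ⟨rfl, -⟩
  · rfl
  · exact (disjoint_left.mp hAB hab.1 hcd.2).elim

lemma card_image_prod_powersetCard_two [DecidableEq M]
    (hfree : UniqueFactorizationOfPairProducts Sq)
    {A : Finset M} (hA : ↑A ⊆ Sq) :
    ((A.powersetCard 2).image fun s => s.prod id).card = A.card.choose 2 := by
  rw [card_image_of_injOn, card_powersetCard]
  intro s hs t ht hst
  simp only [mem_coe, mem_powersetCard] at hs ht
  obtain ⟨a, b, hab, rfl⟩ := card_eq_two.mp hs.2
  obtain ⟨c, d, hcd, rfl⟩ := card_eq_two.mp ht.2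
  simp only [prod_pair hab, prod_pair hcd, id] at hst
  rcases eq_and_eq_or_eq_and_eq_of_mul_eq_mul hfree (hA (hs.1 (by simp))) (hA (hs.1 (by simp)))
    (hA (ht.1 (by simp))) (hA (ht.1 (by simp))) hst with ⟨rfl, rfl⟩ | ⟨rfl, rfl⟩
  · rfl
  · exact pair_comm _ _

end TwoPrimeFactorizations

section DegreeCounting

variable {M : Type*} {deg : M → ℕ} (hfib : ∀ n, {x | deg x = n}.Finite)

noncomputable def degreeFinset (P : Set M) (m : ℕ) : Finset M :=
  ((hfib m).inter_of_left P).toFinset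

@[simp]
lemma mem_degreeFinset {P : Set M} {m : ℕ} {x : M} :
    x ∈ degreeFinset hfib P m ↔ deg x = m ∧ x ∈ P := by
  simp [degreeFinset]

lemma card_degreeFinset (P : Set M) (m : ℕ) : (degreeFinset hfib P m).card = cntIn deg P m :=
  (Nat.card_eq_card_finite_toFinset _).symm

variable [CommMonoid M] [DecidableEq M]

noncomputable def pairProducts (Sq : Set M) (r s : ℕ) : Finset M :=
  (degreeFinset hfib Sq r ×ˢ degreeFinset hfib Sq s).image fun p => p.1 * p.2

lemma mem_pairProducts {Sq : Set M} {r s : ℕ} {x : M} :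
    x ∈ pairProducts hfib Sq r s ↔ ∃ a ∈ Sq, ∃ b ∈ Sq, deg a = r ∧ deg b = s ∧ a * b = x := by
  simp only [pairProducts, mem_image, mem_product, mem_degreeFinset, Prod.exists]
  aesop

variable {Sq : Set M}

lemma pairProducts_subset_degreeFinset {Sp : Set M}
    (hdeg_mul : ∀ x y, deg (x * y) = deg x * deg y) (hprod_mem : ∀ a ∈ Sq, ∀ b ∈ Sq, a * b ∈ Sp)
    (r s : ℕ) : pairProducts hfib Sq r s ⊆ degreeFinset hfib Sp (r * s) := by
  intro x hx
  obtain ⟨a, ha, b, hb, rfl, rfl, rfl⟩ := (mem_pairProducts hfib).mp hx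
  exact (mem_degreeFinset hfib).mpr ⟨hdeg_mul a b, hprod_mem a ha b hb⟩

lemma disjoint_pairProducts_degreeFinset (hfree : UniqueFactorizationOfPairProducts Sq)
    (r s m : ℕ) :
    Disjoint (pairProducts hfib Sq r s) (degreeFinset hfib Sq m) := by
  refine disjoint_left.mpr fun x hx hxm => ?_
  obtain ⟨a, ha, b, hb, -, -, rfl⟩ := (mem_pairProducts hfib).mp hx
  exact mul_notMem hfree ha hb ((mem_degreeFinset hfib).mp hxm).2

lemma disjoint_pairProducts (hfree : UniqueFactorizationOfPairProducts Sq) {r s r' s' : ℕ}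
    (hrs : r ≤ s) (hrs' : r' ≤ s') (hne : r ≠ r') :
    Disjoint (pairProducts hfib Sq r s) (pairProducts hfib Sq r' s') := by
  refine disjoint_left.mpr fun x hx hx' => hne ?_
  obtain ⟨a, ha, b, hb, rfl, rfl, rfl⟩ := (mem_pairProducts hfib).mp hx
  obtain ⟨c, hc, d, hd, rfl, rfl, hcd⟩ := (mem_pairProducts hfib).mp hx'
  exact deg_eq_of_mul_eq_mul deg hfree ha hb hc hd hrs hrs' hcd.symm

lemma card_pairProducts (hfree : UniqueFactorizationOfPairProducts Sq) {r s : ℕ} (hrs : r ≠ s) :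
    (pairProducts hfib Sq r s).card = cntIn deg Sq r * cntIn deg Sq s := by
  rw [pairProducts, card_image_mul_product hfree, card_degreeFinset, card_degreeFinset]
  · exact fun x hx => ((mem_degreeFinset hfib).mp hx).2
  · exact fun x hx => ((mem_degreeFinset hfib).mp hx).2
  · exact disjoint_left.mpr fun x hr hs =>
      hrs (((mem_degreeFinset hfib).mp hr).1.symm.trans ((mem_degreeFinset hfib).mp hs).1)

lemma card_biUnion_pairProducts (hfree : UniqueFactorizationOfPairProducts Sq) {n : ℕ}
    {D : Finset ℕ} (hD : ∀ r ∈ D, r < n / r) :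
    (D.biUnion fun r => pairProducts hfib Sq r (n / r)).card =
      ∑ r ∈ D, cntIn deg Sq r * cntIn deg Sq (n / r) := by
  rw [card_biUnion fun r hr r' hr' hne =>
    disjoint_pairProducts hfib hfree (hD r hr).le (hD r' hr').le hne]
  exact sum_congr rfl fun r hr => card_pairProducts hfib hfree (hD r hr).ne

noncomputable def distinctPairProducts (Sq : Set M) (m : ℕ) : Finset M :=
  ((degreeFinset hfib Sq m).powersetCard 2).image fun s => s.prod id

lemma distinctPairProducts_subset_pairProducts (m : ℕ) :
    distinctPairProducts hfib Sq m ⊆ pairProducts hfib Sq m m := by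
  intro x hx
  simp only [distinctPairProducts, mem_image, mem_powersetCard] at hx
  obtain ⟨s, ⟨hs, hcard⟩, rfl⟩ := hx
  obtain ⟨a, b, hab, rfl⟩ := card_eq_two.mp hcard
  have ha := (mem_degreeFinset hfib).mp (hs (mem_insert_self a {b}))
  have hb := (mem_degreeFinset hfib).mp (hs (mem_insert_of_mem (mem_singleton_self b)))
  exact (mem_pairProducts hfib).mpr ⟨a, ha.2, b, hb.2, ha.1, hb.1, (prod_pair (f := id) hab).symm⟩

lemma card_distinctPairProducts (hfree : UniqueFactorizationOfPairProducts Sq) (m : ℕ) :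
    (distinctPairProducts hfib Sq m).card = (cntIn deg Sq m).choose 2 := by
  rw [distinctPairProducts, card_image_prod_powersetCard_two hfree, card_degreeFinset]
  exact fun x hx => ((mem_degreeFinset hfib).mp hx).2

end DegreeCounting

theorem sum_cntIn_mul_add_cntIn_add_choose_le {M : Type*} [CommMonoid M] {deg : M → ℕ}
    {Sp Sq : Set M} (hfib : ∀ n, {x | deg x = n}.Finite)
    (hdeg_mul : ∀ x y, deg (x * y) = deg x * deg y) (hSqSp : Sq ⊆ Sp)
    (hprod_mem : ∀ a ∈ Sq, ∀ b ∈ Sq, a * b ∈ Sp) (hfree : UniqueFactorizationOfPairProducts Sq)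
    (n : ℕ) :
    (∑ r ∈ n.divisors.filter fun r => 2 ≤ r ∧ r * r < n,
          cntIn deg Sq r * cntIn deg Sq (n / r)) +
        cntIn deg Sq n +
        (if n.sqrt * n.sqrt = n then (cntIn deg Sq n.sqrt).choose 2 else 0) ≤
      cntIn deg Sp n := by
  classical
  set D := n.divisors.filter fun r => 2 ≤ r ∧ r * r < n
  have hD : ∀ r ∈ D, r ∣ n ∧ r < n / r := by
    intro r hr
    obtain ⟨⟨hdvd, -⟩, -, hlt⟩ := by simpa only [D, mem_filter, Nat.mem_divisors] using hr
    exact ⟨hdvd, (Nat.lt_div_iff_mul_lt' hdvd r).mpr hlt⟩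
  set A := D.biUnion fun r => pairProducts hfib Sq r (n / r)
  have hA_card := card_biUnion_pairProducts hfib hfree fun r hr => (hD r hr).2
  obtain ⟨C, hC_card, hC⟩ : ∃ C : Finset M,
      C.card = (if n.sqrt * n.sqrt = n then (cntIn deg Sq n.sqrt).choose 2 else 0) ∧
      ∀ x ∈ C, n.sqrt * n.sqrt = n ∧ x ∈ pairProducts hfib Sq n.sqrt n.sqrt := by
    split_ifs with hsq
    · exact ⟨_, card_distinctPairProducts hfib hfree _,
        fun x hx => ⟨hsq, distinctPairProducts_subset_pairProducts hfib _ hx⟩⟩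
    · exact ⟨∅, rfl, by simp⟩
  have hAC : Disjoint A C := by
    refine (disjoint_biUnion_left _ _ _).mpr fun r hr => disjoint_left.mpr fun x hxr hxC => ?_
    obtain ⟨hsq, hx⟩ := hC x hxC
    have : r * r < n.sqrt * n.sqrt := hsq.symm ▸ (mem_filter.mp hr).2.2
    exact disjoint_left.mp (disjoint_pairProducts hfib hfree (hD r hr).2.le le_rfl
      (Nat.mul_self_lt_mul_self_iff.mp this).ne) hxr hx
  have hACQ : Disjoint (A ∪ C) (degreeFinset hfib Sq n) := by
    refine disjoint_union_left.mpr ⟨(disjoint_biUnion_left _ _ _).mpr fun r _ =>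
      disjoint_pairProducts_degreeFinset hfib hfree _ _ _, disjoint_left.mpr fun x hx => ?_⟩
    exact disjoint_left.mp (disjoint_pairProducts_degreeFinset hfib hfree _ _ _) (hC x hx).2
  have hsub : A ∪ C ∪ degreeFinset hfib Sq n ⊆ degreeFinset hfib Sp n := by
    refine union_subset (union_subset (biUnion_subset.mpr fun r hr => ?_) fun x hx => ?_) ?_
    · conv_rhs => rw [← Nat.mul_div_cancel' (hD r hr).1]
      exact pairProducts_subset_degreeFinset hfib hdeg_mul hprod_mem _ _
    · obtain ⟨hsq, hx⟩ := hC x hx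
      exact hsq ▸ pairProducts_subset_degreeFinset hfib hdeg_mul hprod_mem _ _ hx
    · exact fun x hx => (mem_degreeFinset hfib).mpr
        ⟨((mem_degreeFinset hfib).mp hx).1, hSqSp ((mem_degreeFinset hfib).mp hx).2⟩
  calc _ = (A ∪ C ∪ degreeFinset hfib Sq n).card := by
        rw [card_union_of_disjoint hACQ, card_union_of_disjoint hAC, hA_card, hC_card,
          card_degreeFinset]
        ring
    _ ≤ (degreeFinset hfib Sp n).card := card_le_card hsub
    _ = cntIn deg Sp n := card_degreeFinset hfib Sp n

theorem stmt_6_general {S : Type*} [CommSemiring S]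
    (Sp Sq : Set S) (deg : S → ℕ)
    (hdeg_mul : ∀ x y : S, deg (x * y) = deg x * deg y)
    (hfib : ∀ n : ℕ, {x : S | deg x = n}.Finite)
    (hSqSp : Sq ⊆ Sp)
    (hmul_mem : ∀ x ∈ Sp, ∀ y ∈ Sp, x * y ∈ Sp)
    (hmul_free : ∀ x ∈ Sp, ∃! f : Sq →₀ ℕ, x = f.prod fun q n => (q : S) ^ n) :
    ∀ n : ℕ, 2 ≤ n →
      (∑ r ∈ n.divisors.filter fun r => 2 ≤ r ∧ r * r < n,
            cntIn deg Sq r * cntIn deg Sq (n / r)) +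
          cntIn deg Sq n +
          (if n.sqrt * n.sqrt = n then (cntIn deg Sq n.sqrt).choose 2 else 0) ≤
        cntIn deg Sp n := fun n _ =>
  have hprod_mem : ∀ a ∈ Sq, ∀ b ∈ Sq, a * b ∈ Sp := fun a ha b hb =>
    hmul_mem a (hSqSp ha) b (hSqSp hb)
  sum_cntIn_mul_add_cntIn_add_choose_le hfib hdeg_mul hSqSp hprod_mem
    (fun a ha b hb => hmul_free _ (hprod_mem a ha b hb)) n

/-- In an arithmetical semiring `(S, +, □, ∂)` (additive monoid free on the additive primes `Sp`,
multiplicative monoid of additive primes free on the multiplicative primes `Sq`, degree a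
semiring homomorphism to `ℕ` with finite fibers, `∂⁻¹(0) = {0}` and `∂⁻¹(1) ∩ Sp = {1}`),
for each `n ≥ 2`:
`Σ_{r ∣ n, 2 ≤ r < √n} S□(r)·S□(n/r) ≤ S⁺(n) − S□(n) − C(n)`, where
`C(n) = binom(S□(√n), 2)` if `n` is a perfect square and `0` otherwise.
(Stated additively to avoid truncated subtraction.) -/
theorem stmt_6 {S : Type*} [CommSemiring S]
    (Sp Sq : Set S) (deg : S → ℕ)
    (hdeg_zero : deg 0 = 0) (hdeg_one : deg 1 = 1)
    (hdeg_add : ∀ x y : S, deg (x + y) = deg x + deg y)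
    (hdeg_mul : ∀ x y : S, deg (x * y) = deg x * deg y)
    (hfiber0 : ∀ x : S, deg x = 0 ↔ x = 0)
    (hfib : ∀ n : ℕ, {x : S | deg x = n}.Finite)
    (hadd_free : ∀ x : S, ∃! f : Sp →₀ ℕ, x = f.sum fun p n => n • (p : S))
    (hSqSp : Sq ⊆ Sp)
    (hone_mem : (1 : S) ∈ Sp)
    (hmul_mem : ∀ x ∈ Sp, ∀ y ∈ Sp, x * y ∈ Sp)
    (hmul_free : ∀ x ∈ Sp, ∃! f : Sq →₀ ℕ, x = f.prod fun q n => (q : S) ^ n)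
    (hfiber1 : ∀ x ∈ Sp, (deg x = 1 ↔ x = 1)) :
    ∀ n : ℕ, 2 ≤ n →
      (∑ r ∈ n.divisors.filter fun r => 2 ≤ r ∧ r * r < n,
            cntIn deg Sq r * cntIn deg Sq (n / r)) +
          cntIn deg Sq n +
          (if n.sqrt * n.sqrt = n then (cntIn deg Sq n.sqrt).choose 2 else 0) ≤
        cntIn deg Sp n :=
  stmt_6_general Sp Sq deg hdeg_mul hfib hSqSp hmul_mem hmul_free
end

section
/- Let (S,+,□,∂) be a monotonic arithmetical semiring (i.e. there is N such that S⁺(n) ≤ S⁺(n+1) for all n ≥ N), and let D > 2 be an integer. Then for all sufficiently large n: S⁺(n) − S□(n) − Σ_{r=2}^{D−1, r ∣ n} S□(r)·S⁺(n/r) ≤ S(⌊n/D⌋ + D) − S⁺(⌊n/D⌋ + D). -/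
/-!
Split the additive primes of degree `n` into multiplicative primes and products `q * y` with `q`
a multiplicative prime of minimal degree, so `∂q ≤ ∂y`; this bounds `S⁺(n)` by `S□(n)` plus the
sum of `S□(r) S⁺(n / r)` over divisors `2 ≤ r ≤ √n` of `n`. The divisors `r < D` stay on the
right. For the others, `n / r ≤ M - r` with `M = ⌊n/D⌋ + D`, so by monotonicity their terms are at
most `S□(r) S⁺(M - r)`. Since `2r < M`, the sums `a + b` of a multiplicative prime of degree `r`
and an additive prime of degree `M - r` are pairwise distinct elements of degree `M` that are not
additive primes, which gives `S⁺(M) + Σ S□(r) S⁺(M - r) ≤ S(M)`.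
-/

theorem Nat.div_add_le_div_add {n r D : ℕ} (hD : 0 < D) (hDr : D ≤ r) (hrD : r * D ≤ n)
    (hdvd : r ∣ n) : n / r + r ≤ n / D + D := by
  obtain ⟨k, rfl⟩ := hdvd
  have hr : 0 < r := hD.trans_le hDr
  have hDk : D ≤ k := Nat.le_of_mul_le_mul_left (by linarith) hr
  rw [Nat.mul_div_cancel_left _ hr]
  have : (k + r - D) * D ≤ r * k := by
    zify [(by omega : D ≤ k + r)]
    nlinarith
  have := (Nat.le_div_iff_mul_le hD).mpr this
  omega

theorem Nat.le_div_of_dvd_of_mul_self_le {N n r : ℕ} (hdvd : r ∣ n) (hr : r * r ≤ n)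
    (hN : N * N ≤ n) : N ≤ n / r := by
  obtain ⟨k, rfl⟩ := hdvd
  rcases r.eq_zero_or_pos with rfl | hr0
  · simpa using hN
  rw [Nat.mul_div_cancel_left _ hr0]
  have : r ≤ k := Nat.le_of_mul_le_mul_left hr hr0
  exact Nat.mul_self_le_mul_self_iff.mp (hN.trans (Nat.mul_le_mul_right k this))

theorem Nat.two_mul_lt_div_add {n r D : ℕ} (hD : 0 < D) (hn : 4 * D * D ≤ n) (hr : r * r ≤ n) :
    2 * r < n / D + D := by
  have : 2 * r ≤ n / D := (Nat.le_div_iff_mul_le hD).mpr <| by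
    rcases le_total r (2 * D) with h | h <;> nlinarith
  omega

theorem Nat.card_sigma_finset {ι : Type*} (F : Finset ι) (β : ι → Type*) [∀ i, Finite (β i)] :
    Nat.card ((i : F) × β i) = ∑ i ∈ F, Nat.card (β i) := by
  rw [Nat.card_sigma, Finset.sum_coe_sort F fun i => Nat.card (β i)]

section ArithmeticalSemiring

variable {S : Type*} [CommSemiring S] {Sp Sq : Set S} {deg : S → ℕ}

omit [CommSemiring S] in
theorem finite_deg_eq_and_mem (hfib : ∀ n : ℕ, {x : S | deg x = n}.Finite) (n : ℕ) (P : Set S) :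
    Finite {x : S // deg x = n ∧ x ∈ P} :=
  ((hfib n).subset fun _ hx => hx.1 : {x : S | deg x = n ∧ x ∈ P}.Finite).to_subtype

theorem linearIndependent_of_existsUnique
    (hadd_free : ∀ x : S, ∃! f : Sp →₀ ℕ, x = f.sum fun p n => n • (p : S)) :
    LinearIndependent ℕ ((↑) : Sp → S) := fun f g h =>
  (hadd_free _).unique (Finsupp.linearCombination_apply ℕ f)
    (h.trans (Finsupp.linearCombination_apply ℕ g))

theorem add_ne_of_linearIndependent (hli : LinearIndependent ℕ ((↑) : Sp → S))
    {a b c : S} (ha : a ∈ Sp) (hb : b ∈ Sp) (hc : c ∈ Sp) : a + b ≠ c := by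
  intro h
  have := congrArg Finsupp.degree <|
    @hli (.single ⟨a, ha⟩ 1 + .single ⟨b, hb⟩ 1) (.single ⟨c, hc⟩ 1) (by simpa using h)
  simp [Finsupp.degree_single] at this

theorem add_eq_add_iff_of_linearIndependent (hli : LinearIndependent ℕ ((↑) : Sp → S))
    {a b c d : S} (ha : a ∈ Sp) (hb : b ∈ Sp) (hc : c ∈ Sp) (hd : d ∈ Sp) :
    a + b = c + d ↔ (a = c ∧ b = d) ∨ (a = d ∧ b = c) := by
  constructor
  · intro h
    have := @hli (.single ⟨a, ha⟩ 1 + .single ⟨b, hb⟩ 1) (.single ⟨c, hc⟩ 1 + .single ⟨d, hd⟩ 1)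
      (by simpa using h)
    simpa [Finsupp.single_add_single_eq_single_add_single] using this
  · rintro (⟨rfl, rfl⟩ | ⟨rfl, rfl⟩)
    · rfl
    · exact add_comm _ _

theorem one_notMem_of_existsUnique
    (h : ∃! f : Sq →₀ ℕ, (1 : S) = f.prod fun q n => (q : S) ^ n) : (1 : S) ∉ Sq := fun h1 =>
  Finsupp.single_ne_zero.mpr one_ne_zero <|
    h.unique (y₁ := Finsupp.single ⟨1, h1⟩ 1) (y₂ := 0) (by simp) (by simp)

theorem deg_pos_of_mem (hfiber0 : ∀ x : S, deg x = 0 ↔ x = 0)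
    (hli : LinearIndependent ℕ ((↑) : Sp → S)) {x : S} (hx : x ∈ Sp) : 0 < deg x :=
  Nat.pos_of_ne_zero fun h => hli.ne_zero ⟨x, hx⟩ ((hfiber0 x).mp h)

theorem two_le_deg_of_mem (hpos : ∀ x ∈ Sp, 0 < deg x) (hSqSp : Sq ⊆ Sp)
    (hfiber1 : ∀ x ∈ Sp, (deg x = 1 ↔ x = 1)) (hone : (1 : S) ∉ Sq) {q : S} (hq : q ∈ Sq) :
    2 ≤ deg q := by
  have := hpos q (hSqSp hq)
  have : deg q ≠ 1 := fun h => hone ((hfiber1 q (hSqSp hq)).mp h ▸ hq)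
  omega

theorem exists_multiset_prod_eq {x : S}
    (hmul_free : ∃ f : Sq →₀ ℕ, x = f.prod fun q n => (q : S) ^ n) :
    ∃ s : Multiset S, (∀ q ∈ s, q ∈ Sq) ∧ x = s.prod := by
  obtain ⟨f, rfl⟩ := hmul_free
  refine ⟨f.toMultiset.map (↑), fun q hq => ?_, ?_⟩
  · obtain ⟨q, -, rfl⟩ := Multiset.mem_map.mp hq
    exact q.2
  rw [Finsupp.toMultiset_map, Finsupp.prod_toMultiset, Finsupp.prod_mapDomain_index (by simp)
    (fun _ _ _ => pow_add _ _ _)]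

theorem exists_mul_of_two_le_card
    (hdeg_mul : ∀ x y : S, deg (x * y) = deg x * deg y) (hpos : ∀ x ∈ Sp, 0 < deg x)
    (hSqSp : Sq ⊆ Sp) (hone_mem : (1 : S) ∈ Sp) (hmul_mem : ∀ x ∈ Sp, ∀ y ∈ Sp, x * y ∈ Sp)
    {s : Multiset S} (hs : ∀ q ∈ s, q ∈ Sq) (hcard : 2 ≤ Multiset.card s) :
    ∃ q ∈ Sq, ∃ y ∈ Sp, s.prod = q * y ∧ deg q ≤ deg y := by
  classical
  have prod_mem : ∀ t ≤ s, t.prod ∈ Sp := fun t ht =>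
    Multiset.prod_induction (· ∈ Sp) t (fun a b ha hb => hmul_mem a ha b hb) hone_mem
      fun a ha => hSqSp (hs a (Multiset.mem_of_le ht ha))
  obtain ⟨q, hqs, hqmin⟩ := s.toFinset.exists_min_image deg
    (Multiset.toFinset_nonempty.mpr (Multiset.card_pos.mp (by omega)))
  obtain ⟨t, rfl⟩ := Multiset.exists_cons_of_mem (Multiset.mem_toFinset.mp hqs)
  obtain ⟨p, hpt⟩ := (Multiset.card_pos_iff_exists_mem (s := t)).mp
    (by rw [Multiset.card_cons] at hcard; omega)
  obtain ⟨u, rfl⟩ := Multiset.exists_cons_of_mem hpt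
  refine ⟨q, hs q (Multiset.mem_cons_self _ _), _, prod_mem _ (Multiset.le_cons_self _ _),
    Multiset.prod_cons _ _, ?_⟩
  have hu : u ≤ q ::ₘ p ::ₘ u := (Multiset.le_cons_self _ _).trans (Multiset.le_cons_self _ _)
  calc deg q ≤ deg p := hqmin p (by simp)
    _ ≤ deg p * deg u.prod := Nat.le_mul_of_pos_right _ (hpos _ (prod_mem u hu))
    _ = deg (p ::ₘ u).prod := by rw [Multiset.prod_cons, hdeg_mul]

theorem exists_mul_of_mem_of_notMem (hdeg_mul : ∀ x y : S, deg (x * y) = deg x * deg y)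
    (hpos : ∀ x ∈ Sp, 0 < deg x) (hSqSp : Sq ⊆ Sp) (hone_mem : (1 : S) ∈ Sp)
    (hmul_mem : ∀ x ∈ Sp, ∀ y ∈ Sp, x * y ∈ Sp)
    (hmul_free : ∀ x ∈ Sp, ∃! f : Sq →₀ ℕ, x = f.prod fun q n => (q : S) ^ n)
    (hfiber1 : ∀ x ∈ Sp, (deg x = 1 ↔ x = 1)) {x : S} (hx : x ∈ Sp) (hxq : x ∉ Sq)
    (hx1 : deg x ≠ 1) : ∃ q ∈ Sq, ∃ y ∈ Sp, x = q * y ∧ deg q ≤ deg y := by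
  obtain ⟨s, hs, rfl⟩ := exists_multiset_prod_eq (hmul_free x hx).exists
  refine exists_mul_of_two_le_card hdeg_mul hpos hSqSp hone_mem hmul_mem hs ?_
  by_contra! hcard
  interval_cases hc : Multiset.card s
  · rw [Multiset.card_eq_zero.mp hc, Multiset.prod_zero] at hx1
    exact hx1 ((hfiber1 1 hone_mem).mpr rfl)
  · obtain ⟨q, rfl⟩ := Multiset.card_eq_one.mp hc
    exact hxq (by simpa using hs q (Multiset.mem_singleton_self q))

theorem cntIn_le_cntIn_add_sum_divisors (hdeg_mul : ∀ x y : S, deg (x * y) = deg x * deg y)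
    (hfib : ∀ n : ℕ, {x : S | deg x = n}.Finite) (htwo_le : ∀ q ∈ Sq, 2 ≤ deg q)
    (hfactor : ∀ x ∈ Sp, x ∉ Sq → deg x ≠ 1 → ∃ q ∈ Sq, ∃ y ∈ Sp, x = q * y ∧ deg q ≤ deg y)
    {n : ℕ} (hn : n ≠ 1) :
    cntIn deg Sp n ≤ cntIn deg Sq n +
      ∑ r ∈ n.divisors.filter (fun r => 2 ≤ r ∧ r * r ≤ n),
        cntIn deg Sq r * cntIn deg Sp (n / r) := by
  classical
  have := finite_deg_eq_and_mem hfib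
  set F := n.divisors.filter (fun r => 2 ≤ r ∧ r * r ≤ n)
  let pairs (r : ℕ) := {a : S // deg a = r ∧ a ∈ Sq} × {b : S // deg b = n / r ∧ b ∈ Sp}
  let T := {x : S // deg x = n ∧ x ∈ Sq} ⊕ (r : F) × pairs r
  have hfactor' (x : {x : S // deg x = n ∧ x ∈ Sp}) (hx : x.1 ∉ Sq) :
      ∃ q ∈ Sq, ∃ y ∈ Sp, x.1 = q * y ∧ deg q ≤ deg y :=
    hfactor x x.2.2 hx (by rw [x.2.1]; exact hn)
  choose q hq y hy hxqy hqy using hfactor'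
  have hdeg (x) (hx) : deg (q x hx) * deg (y x hx) = n := by rw [← hdeg_mul, ← hxqy, x.2.1]
  have hmem (x) (hx) : deg (q x hx) ∈ F := by
    have := htwo_le _ (hq x hx)
    have hn0 : n ≠ 0 := hdeg x hx ▸ Nat.mul_ne_zero (by omega) (by have := hqy x hx; omega)
    refine Finset.mem_filter.mpr ⟨Nat.mem_divisors.mpr ⟨Dvd.intro _ (hdeg x hx), hn0⟩,
      this, ?_⟩
    exact (hdeg x hx) ▸ Nat.mul_le_mul_left _ (hqy x hx)
  have hdiv (x) (hx) : deg (y x hx) = n / deg (q x hx) := by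
    rw [← hdeg x hx, Nat.mul_div_cancel_left _ (by have := htwo_le _ (hq x hx); omega)]
  let split : {x : S // deg x = n ∧ x ∈ Sp} → T := fun x =>
    if hx : x.1 ∈ Sq then .inl ⟨x, x.2.1, hx⟩
    else .inr ⟨⟨_, hmem x hx⟩, ⟨q x hx, rfl, hq x hx⟩, ⟨y x hx, hdiv x hx, hy x hx⟩⟩
  let join : T → S
    | .inl a => a
    | .inr ⟨_, a, b⟩ => a * b
  have hjoin : ∀ x, join (split x) = x := fun x => by
    by_cases hx : x.1 ∈ Sq
    · simp [split, join, hx]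
    · simp [split, join, hx, ← hxqy]
  have hinj : Function.Injective split := fun x₁ x₂ h =>
    Subtype.ext (by rw [← hjoin x₁, ← hjoin x₂, h])
  calc cntIn deg Sp n ≤ Nat.card T := Nat.card_le_card_of_injective split hinj
    _ = _ := by
      rw [Nat.card_sum, Nat.card_sigma_finset F pairs]
      simp only [pairs, Nat.card_prod]
      rfl

theorem cntIn_add_sum_le_cntAll (hdeg_add : ∀ x y : S, deg (x + y) = deg x + deg y)
    (hfib : ∀ n : ℕ, {x : S | deg x = n}.Finite) (hli : LinearIndependent ℕ ((↑) : Sp → S))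
    (hSqSp : Sq ⊆ Sp) {M : ℕ} (F : Finset ℕ) (hF : ∀ r ∈ F, 2 * r < M) :
    cntIn deg Sp M + ∑ r ∈ F, cntIn deg Sq r * cntIn deg Sp (M - r) ≤ cntAll deg M := by
  have := finite_deg_eq_and_mem hfib
  have : Finite {x : S // deg x = M} := (hfib M).to_subtype
  let pairs (r : ℕ) := {a : S // deg a = r ∧ a ∈ Sq} × {b : S // deg b = M - r ∧ b ∈ Sp}
  let T := {x : S // deg x = M ∧ x ∈ Sp} ⊕ (r : F) × pairs r
  let join : T → {x : S // deg x = M}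
    | .inl x => ⟨x, x.2.1⟩
    | .inr ⟨r, a, b⟩ => ⟨a + b, by rw [hdeg_add, a.2.1, b.2.1]; have := hF r r.2; omega⟩
  have hinj : Function.Injective join := by
    rintro (x₁ | ⟨⟨r₁, hr₁⟩, ⟨a₁, ha₁, ha₁q⟩, ⟨b₁, hb₁, hb₁p⟩⟩)
      (x₂ | ⟨⟨r₂, hr₂⟩, ⟨a₂, ha₂, ha₂q⟩, ⟨b₂, hb₂, hb₂p⟩⟩) h <;>
      simp only [join, Subtype.mk.injEq] at h
    · exact congrArg Sum.inl (Subtype.ext h)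
    · exact absurd h.symm (add_ne_of_linearIndependent hli (hSqSp ha₂q) hb₂p x₁.2.2)
    · exact absurd h (add_ne_of_linearIndependent hli (hSqSp ha₁q) hb₁p x₂.2.2)
    · have := hF r₁ hr₁
      have := hF r₂ hr₂
      obtain ⟨rfl, rfl⟩ | ⟨rfl, -⟩ :=
        (add_eq_add_iff_of_linearIndependent hli (hSqSp ha₁q) hb₁p (hSqSp ha₂q) hb₂p).mp h
      · obtain rfl : r₁ = r₂ := ha₁.symm.trans ha₂
        rfl
      · have : r₁ = M - r₂ := ha₁.symm.trans hb₂
        omega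
  calc cntIn deg Sp M + ∑ r ∈ F, cntIn deg Sq r * cntIn deg Sp (M - r) = Nat.card T := by
        rw [Nat.card_sum, Nat.card_sigma_finset F pairs]
        simp only [pairs, Nat.card_prod]
        rfl
    _ ≤ cntAll deg M := Nat.card_le_card_of_injective join hinj

end ArithmeticalSemiring

theorem stmt_7_general {S : Type*} [CommSemiring S]
    (Sp Sq : Set S) (deg : S → ℕ)
    (hdeg_add : ∀ x y : S, deg (x + y) = deg x + deg y)
    (hdeg_mul : ∀ x y : S, deg (x * y) = deg x * deg y)
    (hfiber0 : ∀ x : S, deg x = 0 ↔ x = 0)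
    (hfib : ∀ n : ℕ, {x : S | deg x = n}.Finite)
    (hadd_free : ∀ x : S, ∃! f : Sp →₀ ℕ, x = f.sum fun p n => n • (p : S))
    (hSqSp : Sq ⊆ Sp)
    (hone_mem : (1 : S) ∈ Sp)
    (hmul_mem : ∀ x ∈ Sp, ∀ y ∈ Sp, x * y ∈ Sp)
    (hmul_free : ∀ x ∈ Sp, ∃! f : Sq →₀ ℕ, x = f.prod fun q n => (q : S) ^ n)
    (hfiber1 : ∀ x ∈ Sp, (deg x = 1 ↔ x = 1))
    (hmono : ∃ N : ℕ, ∀ n ≥ N, cntIn deg Sp n ≤ cntIn deg Sp (n + 1))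
    (D : ℕ) (hD : 2 < D) :
    ∃ N : ℕ, ∀ n ≥ N,
      cntIn deg Sp n + cntIn deg Sp (n / D + D) ≤
        cntIn deg Sq n +
          (∑ r ∈ n.divisors.filter fun r => 2 ≤ r ∧ r ≤ D - 1,
            cntIn deg Sq r * cntIn deg Sp (n / r)) +
          cntAll deg (n / D + D) := by
  obtain ⟨N₀, hmono⟩ := hmono
  have hD0 : 0 < D := by omega
  have hli := linearIndependent_of_existsUnique hadd_free
  have hpos (x) (hx : x ∈ Sp) := deg_pos_of_mem hfiber0 hli hx
  have htwo (q) (hq : q ∈ Sq) := two_le_deg_of_mem hpos hSqSp hfiber1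
    (one_notMem_of_existsUnique (hmul_free 1 hone_mem)) hq
  refine ⟨4 * D * D + N₀ * N₀, fun n hn => ?_⟩
  set M := n / D + D
  set F := n.divisors.filter fun r => 2 ≤ r ∧ r * r ≤ n
  have hmul := cntIn_le_cntIn_add_sum_divisors hdeg_mul hfib htwo
    (fun _ => exists_mul_of_mem_of_notMem hdeg_mul hpos hSqSp hone_mem hmul_mem hmul_free
      hfiber1) (n := n) (by nlinarith)
  rw [← Finset.sum_filter_not_add_sum_filter F (D ≤ ·)] at hmul
  have hsmall : ∑ r ∈ F.filter (¬ D ≤ ·), cntIn deg Sq r * cntIn deg Sp (n / r) ≤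
      ∑ r ∈ n.divisors.filter (fun r => 2 ≤ r ∧ r ≤ D - 1),
        cntIn deg Sq r * cntIn deg Sp (n / r) :=
    Finset.sum_le_sum_of_subset fun r hr => by
      simp only [F, Finset.mem_filter, Nat.mem_divisors] at hr ⊢; omega
  have hlarge (r) (hr : r ∈ F.filter (D ≤ ·)) : N₀ ≤ n / r ∧ n / r + r ≤ M ∧ 2 * r < M := by
    simp only [F, Finset.mem_filter, Nat.mem_divisors] at hr
    obtain ⟨⟨⟨hdvd, -⟩, -, hrr⟩, hDr⟩ := hr
    exact ⟨Nat.le_div_of_dvd_of_mul_self_le hdvd hrr (by omega),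
      Nat.div_add_le_div_add hD0 hDr (by nlinarith) hdvd,
      Nat.two_mul_lt_div_add hD0 (by omega) hrr⟩
  have hshift : ∑ r ∈ F.filter (D ≤ ·), cntIn deg Sq r * cntIn deg Sp (n / r) ≤
      ∑ r ∈ F.filter (D ≤ ·), cntIn deg Sq r * cntIn deg Sp (M - r) := by
    refine Finset.sum_le_sum fun r hr => Nat.mul_le_mul_left _ ?_
    obtain ⟨hN₀, hle, -⟩ := hlarge r hr
    exact monotoneOn_nat_Ici_of_le_succ hmono hN₀ (hN₀.trans (by omega)) (by omega)
  have hadd := cntIn_add_sum_le_cntAll hdeg_add hfib hli hSqSp (F.filter (D ≤ ·)) (M := M)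
    fun r hr => (hlarge r hr).2.2
  omega

/-- In an arithmetical semiring `(S, +, □, ∂)` (additive monoid free on the additive primes `Sp`,
multiplicative monoid of additive primes free on the multiplicative primes `Sq`, degree a
semiring homomorphism to `ℕ` with finite fibers, `∂⁻¹(0) = {0}` and `∂⁻¹(1) ∩ Sp = {1}`),
assumed monotonic
(`S⁺(n) ≤ S⁺(n+1)` for all large `n`), and `D > 2` an integer: for all sufficiently large `n`,
`S⁺(n) − S□(n) − Σ_{r ∣ n, 2 ≤ r ≤ D−1} S□(r)·S⁺(n/r) ≤ S(⌊n/D⌋ + D) − S⁺(⌊n/D⌋ + D)`.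
(Stated additively to avoid truncated subtraction.) -/
theorem stmt_7 {S : Type*} [CommSemiring S]
    (Sp Sq : Set S) (deg : S → ℕ)
    (hdeg_zero : deg 0 = 0) (hdeg_one : deg 1 = 1)
    (hdeg_add : ∀ x y : S, deg (x + y) = deg x + deg y)
    (hdeg_mul : ∀ x y : S, deg (x * y) = deg x * deg y)
    (hfiber0 : ∀ x : S, deg x = 0 ↔ x = 0)
    (hfib : ∀ n : ℕ, {x : S | deg x = n}.Finite)
    (hadd_free : ∀ x : S, ∃! f : Sp →₀ ℕ, x = f.sum fun p n => n • (p : S))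
    (hSqSp : Sq ⊆ Sp)
    (hone_mem : (1 : S) ∈ Sp)
    (hmul_mem : ∀ x ∈ Sp, ∀ y ∈ Sp, x * y ∈ Sp)
    (hmul_free : ∀ x ∈ Sp, ∃! f : Sq →₀ ℕ, x = f.prod fun q n => (q : S) ^ n)
    (hfiber1 : ∀ x ∈ Sp, (deg x = 1 ↔ x = 1))
    (hmono : ∃ N : ℕ, ∀ n ≥ N, cntIn deg Sp n ≤ cntIn deg Sp (n + 1))
    (D : ℕ) (hD : 2 < D) :
    ∃ N : ℕ, ∀ n ≥ N,
      cntIn deg Sp n + cntIn deg Sp (n / D + D) ≤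
        cntIn deg Sq n +
          (∑ r ∈ n.divisors.filter fun r => 2 ≤ r ∧ r ≤ D - 1,
            cntIn deg Sq r * cntIn deg Sp (n / r)) +
          cntAll deg (n / D + D) :=
  stmt_7_general Sp Sq deg hdeg_add hdeg_mul hfiber0 hfib hadd_free hSqSp hone_mem hmul_mem
    hmul_free hfiber1 hmono D hD
end

section
/- Let (S,+,□,∂) be a monotonic arithmetical semiring and let p be the smallest integer with S□(p) ≠ 0. Then for all sufficiently large n: S⁺(n) − S□(n) ≤ S□(p)·S(⌊n/p⌋) + S(⌊n/(p+1)⌋ + p + 1). -/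
open Finsupp

theorem Finsupp.prod_pow_eq_mul_prod_tsub_single {α M : Type*} [CommMonoid M] (g : α → M)
    (f : α →₀ ℕ) {a : α} (ha : f a ≠ 0) :
    f.prod (fun b n => g b ^ n) = g a * (f - single a 1).prod (fun b n => g b ^ n) := by
  classical
  have hle : single a 1 ≤ f := single_le_iff.2 (Nat.one_le_iff_ne_zero.2 ha)
  conv_lhs => rw [← tsub_add_cancel_of_le hle]
  rw [prod_add_index' (fun _ => pow_zero _) (fun _ _ _ => pow_add _ _ _),
    prod_single_index (h := fun b n => g b ^ n) (pow_zero _), pow_one, mul_comm]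

theorem Finsupp.dvd_prod_pow {α M : Type*} [CommMonoid M] (g : α → M)
    {f : α →₀ ℕ} {a : α} (ha : a ∈ f.support) : g a ∣ f.prod (fun b n => g b ^ n) :=
  Dvd.intro _ (prod_pow_eq_mul_prod_tsub_single g f (mem_support_iff.1 ha)).symm

theorem one_notMem_of_existsUnique_prod {M : Type*} [CommMonoid M] {Q : Set M}
    (h : ∃! f : Q →₀ ℕ, (1 : M) = f.prod fun q n => (q : M) ^ n) : (1 : M) ∉ Q := fun h1 =>
  single_ne_zero.2 one_ne_zero <|
    h.unique (y₁ := single ⟨1, h1⟩ 1) (by simp [prod_single_index]) (by simp)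

theorem prod_erase_eq_mul_of_sum_eq {S : Type*} [CommSemiring S] {P : Set S}
    (hinj : Function.Injective fun f : P →₀ ℕ => f.sum fun c n => n • (c : S))
    {a b e : P} (ha : a ≠ e) (hb : b ≠ e) (k : ℕ) {F : P →₀ ℕ}
    (hF : (F.sum fun c n => n • (c : S)) = a + b + k • (e : S)) :
    (F.erase e).prod (fun c n => (c : S) ^ n) = a * b := by
  obtain rfl : F = single a 1 + single b 1 + single e k := hinj <| hF.trans <| by
    dsimp only
    simp only [sum_add_index' (h := fun (c : P) (n : ℕ) => n • (c : S))
      (fun _ => zero_smul _ _) (fun _ _ _ => add_smul _ _ _), sum_single_index, zero_smul,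
      one_smul]
  simp [erase_add, erase_single_ne ha.symm, erase_single_ne hb.symm, prod_add_index', pow_add]

theorem Nat.add_le_mul_div_add {a b d : ℕ} (hd : 0 < d) (ha : d ≤ a) (hb : d ≤ b) :
    a + b ≤ a * b / d + d := by
  obtain ⟨a, rfl⟩ := Nat.exists_eq_add_of_le ha
  obtain ⟨b, rfl⟩ := Nat.exists_eq_add_of_le hb
  have : (d + a) * (d + b) = a * b + (d + a + b) * d := by ring
  rw [this, Nat.add_mul_div_right _ _ hd]
  have := Nat.zero_le (a * b / d)
  omega

section
variable {S : Type*} [CommSemiring S] {φ : S →+* ℕ} {Sp Sq : Set S}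

theorem exists_eq_mul_of_notMem (hSqSp : Sq ⊆ Sp) (hone : 1 ∈ Sp)
    (hmul : ∀ x ∈ Sp, ∀ y ∈ Sp, x * y ∈ Sp)
    (hmul_free : ∀ x ∈ Sp, ∃! f : Sq →₀ ℕ, x = f.prod fun q n => (q : S) ^ n)
    {d : ℕ} {x : S} (hx : x ∈ Sp) (hxSq : x ∉ Sq) (hx1 : x ≠ 1) (hx0 : φ x ≠ 0)
    (hdvd : ∀ q ∈ Sq, q ∣ x → d ≤ φ q) :
    ∃ a ∈ Sp, ∃ b ∈ Sp, a ≠ 1 ∧ b ≠ 1 ∧ x = a * b ∧ d ≤ φ a ∧ d ≤ φ b := by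
  classical
  let Mp : Submonoid S := ⟨⟨Sp, fun ha hb => hmul _ ha _ hb⟩, hone⟩
  have hSq1 : (1 : S) ∉ Sq := one_notMem_of_existsUnique_prod (hmul_free 1 hone)
  obtain ⟨f, rfl, -⟩ := hmul_free x hx
  have hf : ∀ r ∈ f.support, d ≤ φ r := fun r hr => hdvd r r.2 (dvd_prod_pow _ hr)
  have hf0 : f ≠ 0 := by
    rintro rfl
    exact hx1 prod_zero_index
  obtain ⟨q, hq⟩ := support_nonempty_iff.2 hf0
  have hsplit := prod_pow_eq_mul_prod_tsub_single (fun r : Sq => (r : S)) f (mem_support_iff.1 hq)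
  set g := f - single q 1
  set b := g.prod fun r n => (r : S) ^ n
  have hb1 : b ≠ 1 := by
    intro h
    rw [hsplit, h, mul_one] at hxSq
    exact hxSq q.2
  have hg0 : g ≠ 0 := by
    rintro hg
    exact hb1 (by simp only [b, hg, prod_zero_index])
  obtain ⟨r, hr⟩ := support_nonempty_iff.2 hg0
  have hb0 : φ b ≠ 0 := by
    rw [hsplit, map_mul] at hx0
    exact right_ne_zero_of_mul hx0
  have hbSp : b ∈ Mp := SubmonoidClass.finsuppProd_mem Mp _ _ fun r _ => pow_mem (hSqSp r.2) _
  refine ⟨q, hSqSp q.2, b, hbSp, ne_of_mem_of_not_mem q.2 hSq1, hb1, hsplit, hf q hq, ?_⟩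
  calc d ≤ φ r := hf r (support_tsub hr)
    _ ≤ _ := Nat.le_of_dvd (Nat.pos_of_ne_zero hb0) (map_dvd φ (dvd_prod_pow _ hr))

theorem ncard_multiple_le (hfib : ∀ m, {x : S | φ x = m}.Finite) {n p : ℕ} (hn : n ≠ 0) :
    {x | φ x = n ∧ ∃ q ∈ Sq, φ q = p ∧ q ∣ x}.ncard ≤ cntIn φ Sq p * cntAll φ (n / p) := by
  have hfin : ({q | φ q = p ∧ q ∈ Sq} ×ˢ {y | φ y = n / p}).Finite :=
    ((hfib p).subset fun _ h => h.1).prod (hfib (n / p))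
  have hsub : {x | φ x = n ∧ ∃ q ∈ Sq, φ q = p ∧ q ∣ x} ⊆
      (fun w : S × S => w.1 * w.2) '' ({q | φ q = p ∧ q ∈ Sq} ×ˢ {y | φ y = n / p}) := by
    rintro x ⟨hxn, q, hq, hqp, y, rfl⟩
    rw [map_mul, hqp] at hxn
    have hp : 0 < p := Nat.pos_of_ne_zero fun h => hn (by rw [← hxn, h, zero_mul])
    have hy : φ y = n / p := by rw [← hxn, Nat.mul_div_cancel_left _ hp]
    exact ⟨(q, y), ⟨⟨hqp, hq⟩, hy⟩, rfl⟩
  calc _ ≤ _ := Set.ncard_le_ncard hsub (hfin.image _)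
    _ ≤ _ := Set.ncard_image_le hfin
    _ = _ := Set.ncard_prod

theorem ncard_composite_le (hSqSp : Sq ⊆ Sp) (hone : 1 ∈ Sp)
    (hmul : ∀ x ∈ Sp, ∀ y ∈ Sp, x * y ∈ Sp)
    (hadd_free : ∀ x : S, ∃! f : Sp →₀ ℕ, x = f.sum fun p n => n • (p : S))
    (hmul_free : ∀ x ∈ Sp, ∃! f : Sq →₀ ℕ, x = f.prod fun q n => (q : S) ^ n)
    (hfib : ∀ m, {x : S | φ x = m}.Finite) {d n : ℕ} (hd : 0 < d) (hn : 2 ≤ n) :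
    {x | φ x = n ∧ x ∈ Sp ∧ x ∉ Sq ∧ ∀ q ∈ Sq, q ∣ x → d ≤ φ q}.ncard ≤
      cntAll φ (n / d + d) := by
  choose F hF using fun z => (hadd_free z).exists
  have hinj : Function.Injective fun f : Sp →₀ ℕ => f.sum fun c n => n • (c : S) :=
    fun f g h => (hadd_free _).unique rfl h
  have hsub : {x | φ x = n ∧ x ∈ Sp ∧ x ∉ Sq ∧ ∀ q ∈ Sq, q ∣ x → d ≤ φ q} ⊆
      (fun z => ((F z).erase ⟨1, hone⟩).prod fun c n => (c : S) ^ n) ''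
        {z | φ z = n / d + d} := by
    rintro x ⟨hxn, hx, hxSq, hdvd⟩
    obtain ⟨a, ha, b, hb, ha1, hb1, rfl, hda, hdb⟩ :=
      exists_eq_mul_of_notMem hSqSp hone hmul hmul_free hx hxSq
        (by rintro rfl; rw [map_one] at hxn; omega) (by omega) hdvd
    rw [map_mul] at hxn
    have hab := Nat.add_le_mul_div_add hd hda hdb
    rw [hxn] at hab
    refine ⟨a + b + (n / d + d - (φ a + φ b)) • 1, ?_, ?_⟩
    · show φ (a + b + _ • 1) = _
      rw [map_add, map_add, map_nsmul, map_one, smul_eq_mul, mul_one]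
      omega
    · exact prod_erase_eq_mul_of_sum_eq hinj (a := ⟨a, ha⟩) (b := ⟨b, hb⟩)
        (fun h => ha1 (congrArg Subtype.val h)) (fun h => hb1 (congrArg Subtype.val h)) _
        (hF _).symm
  calc _ ≤ _ := Set.ncard_le_ncard hsub ((hfib _).image _)
    _ ≤ _ := Set.ncard_image_le (hfib _)

end

theorem stmt_10_general {S : Type*} [CommSemiring S]
    (Sp Sq : Set S) (deg : S → ℕ)
    (hdeg_zero : deg 0 = 0) (hdeg_one : deg 1 = 1)
    (hdeg_add : ∀ x y : S, deg (x + y) = deg x + deg y)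
    (hdeg_mul : ∀ x y : S, deg (x * y) = deg x * deg y)
    (hfib : ∀ n : ℕ, {x : S | deg x = n}.Finite)
    (hadd_free : ∀ x : S, ∃! f : Sp →₀ ℕ, x = f.sum fun p n => n • (p : S))
    (hSqSp : Sq ⊆ Sp)
    (hone_mem : (1 : S) ∈ Sp)
    (hmul_mem : ∀ x ∈ Sp, ∀ y ∈ Sp, x * y ∈ Sp)
    (hmul_free : ∀ x ∈ Sp, ∃! f : Sq →₀ ℕ, x = f.prod fun q n => (q : S) ^ n)
    (p : ℕ) (hpmin : ∀ m < p, cntIn deg Sq m = 0) :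
    ∃ N : ℕ, ∀ n ≥ N,
      cntIn deg Sp n ≤
        cntIn deg Sq n + cntIn deg Sq p * cntAll deg (n / p) +
          cntAll deg (n / (p + 1) + p + 1) := by
  let φ : S →+* ℕ :=
    { toFun := deg, map_one' := hdeg_one, map_mul' := hdeg_mul, map_zero' := hdeg_zero,
      map_add' := hdeg_add }
  have hdeg_ge : ∀ q ∈ Sq, p ≤ deg q := fun q hq => not_lt.1 fun h => by
    have hempty : {x | deg x = deg q ∧ x ∈ Sq}.ncard = 0 := hpmin _ h
    rw [Set.ncard_eq_zero ((hfib _).subset fun _ h => h.1)] at hempty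
    exact hempty.subset ⟨rfl, hq⟩
  refine ⟨2, fun n hn => ?_⟩
  have hcover : {x | deg x = n ∧ x ∈ Sp} ⊆ {x | deg x = n ∧ x ∈ Sq} ∪
      {x | deg x = n ∧ ∃ q ∈ Sq, deg q = p ∧ q ∣ x} ∪
      {x | deg x = n ∧ x ∈ Sp ∧ x ∉ Sq ∧ ∀ q ∈ Sq, q ∣ x → p + 1 ≤ deg q} := by
    rintro x ⟨hxn, hx⟩
    by_cases hxSq : x ∈ Sq
    · exact Or.inl (Or.inl ⟨hxn, hxSq⟩)
    by_cases hdvd : ∃ q ∈ Sq, deg q = p ∧ q ∣ x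
    · exact Or.inl (Or.inr ⟨hxn, hdvd⟩)
    simp only [not_exists, not_and] at hdvd
    exact Or.inr ⟨hxn, hx, hxSq, fun q hq hqx =>
      (hdeg_ge q hq).lt_of_ne fun h => hdvd q hq h.symm hqx⟩
  calc cntIn deg Sp n ≤ _ := Set.ncard_le_ncard hcover ((hfib n).subset fun x h => by
        rcases h with (h | h) | h <;> exact h.1)
    _ ≤ _ := (Set.ncard_union_le _ _).trans (add_le_add_left (Set.ncard_union_le _ _) _)
    _ ≤ _ := add_le_add (add_le_add_right (ncard_multiple_le (φ := φ) hfib (by omega)) _)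
        (ncard_composite_le (φ := φ) hSqSp hone_mem hmul_mem hadd_free hmul_free hfib
          (Nat.succ_pos p) hn)

/-- In an arithmetical semiring `(S, +, □, ∂)` (additive monoid free on the additive primes `Sp`,
multiplicative monoid of additive primes free on the multiplicative primes `Sq`, degree a
semiring homomorphism to `ℕ` with finite fibers, `∂⁻¹(0) = {0}` and `∂⁻¹(1) ∩ Sp = {1}`),
assumed monotonic, with `p` the
smallest integer such that `S□(p) ≠ 0`: for all sufficiently large `n`,
`S⁺(n) − S□(n) ≤ S□(p)·S(⌊n/p⌋) + S(⌊n/(p+1)⌋ + p + 1)`.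
(Stated additively to avoid truncated subtraction.) -/
theorem stmt_10 {S : Type*} [CommSemiring S]
    (Sp Sq : Set S) (deg : S → ℕ)
    (hdeg_zero : deg 0 = 0) (hdeg_one : deg 1 = 1)
    (hdeg_add : ∀ x y : S, deg (x + y) = deg x + deg y)
    (hdeg_mul : ∀ x y : S, deg (x * y) = deg x * deg y)
    (hfiber0 : ∀ x : S, deg x = 0 ↔ x = 0)
    (hfib : ∀ n : ℕ, {x : S | deg x = n}.Finite)
    (hadd_free : ∀ x : S, ∃! f : Sp →₀ ℕ, x = f.sum fun p n => n • (p : S))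
    (hSqSp : Sq ⊆ Sp)
    (hone_mem : (1 : S) ∈ Sp)
    (hmul_mem : ∀ x ∈ Sp, ∀ y ∈ Sp, x * y ∈ Sp)
    (hmul_free : ∀ x ∈ Sp, ∃! f : Sq →₀ ℕ, x = f.prod fun q n => (q : S) ^ n)
    (hfiber1 : ∀ x ∈ Sp, (deg x = 1 ↔ x = 1))
    (hmono : ∃ N : ℕ, ∀ n ≥ N, cntIn deg Sp n ≤ cntIn deg Sp (n + 1))
    (p : ℕ) (hp : cntIn deg Sq p ≠ 0) (hpmin : ∀ m < p, cntIn deg Sq m = 0) :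
    ∃ N : ℕ, ∀ n ≥ N,
      cntIn deg Sp n ≤
        cntIn deg Sq n + cntIn deg Sq p * cntAll deg (n / p) +
          cntAll deg (n / (p + 1) + p + 1) :=
  stmt_10_general Sp Sq deg hdeg_zero hdeg_one hdeg_add hdeg_mul hfib hadd_free hSqSp hone_mem
    hmul_mem hmul_free p hpmin
end

section
/- In the arithmetical semiring of finite simple unlabeled graphs (addition = disjoint union, multiplication = Cartesian product, degree = number of vertices), for all sufficiently large n: G⁺(n) − G□(n) ≤ G(⌊n/2⌋) + G(⌊n/3⌋ + 3), where G(n) is the number of graphs on n vertices, G⁺(n) the number of connected graphs on n vertices, and G□(n) the number of connected graphs on n vertices that are prime with respect to the Cartesian product. -/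
open SimpleGraph

/-- A graph on `n` vertices is Cartesian prime if `n ≥ 2` and it is not isomorphic to a
Cartesian (box) product of two graphs each with at least two vertices. -/
def IsCartPrime {n : ℕ} (G : SimpleGraph (Fin n)) : Prop :=
  2 ≤ n ∧ ¬ ∃ (a b : ℕ) (G₁ : SimpleGraph (Fin a)) (G₂ : SimpleGraph (Fin b)),
    2 ≤ a ∧ 2 ≤ b ∧ Nonempty (G ≃g G₁.boxProd G₂)

/-- The number of isomorphism classes of simple graphs on `n` vertices. -/
noncomputable def graphCount (n : ℕ) : ℕ :=
  Nat.card (Quot fun G H : SimpleGraph (Fin n) => Nonempty (G ≃g H))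

/-- The number of isomorphism classes of connected simple graphs on `n` vertices. -/
noncomputable def connCount (n : ℕ) : ℕ :=
  Nat.card (Quot fun G H : {G : SimpleGraph (Fin n) // G.Connected} => Nonempty (G.1 ≃g H.1))

/-- The number of isomorphism classes of connected Cartesian-prime graphs on `n` vertices. -/
noncomputable def primeCount (n : ℕ) : ℕ :=
  Nat.card (Quot fun G H : {G : SimpleGraph (Fin n) // G.Connected ∧ IsCartPrime G} =>
    Nonempty (G.1 ≃g H.1))


/-!
Send every connected graph `G` on `n` vertices to a code from which `G` can be recovered up to
isomorphism. A prime `G` codes itself. Otherwise `G ≃ A □ B` with connected factors on `a, b ≥ 2`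
vertices. If `a = 2` then `A = K₂` and the cofactor `B`, a graph on `n / 2` vertices, is the
code. If `a, b ≥ 3` then `a + b ≤ ab / 3 + 3`, so `A + B` padded with isolated vertices is a graph
on `n / 3 + 3` vertices; its connected components with at least two vertices are exactly `A`
and `B`, so it determines the unordered pair `{A, B}` and hence `A □ B`. Unique factorisation is
never used: any two graphs with a common code are isomorphic.
-/

namespace SimpleGraph

variable {V W V' W' κ : Type*}

lemma equivalence_nonempty_iso : Equivalence fun G H : SimpleGraph V => Nonempty (G ≃g H) :=
  ⟨fun _ => ⟨.refl⟩, fun ⟨e⟩ => ⟨e.symm⟩, fun ⟨e⟩ ⟨f⟩ => ⟨e.trans f⟩⟩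

def Iso.boxProdCongr {G₁ : SimpleGraph V} {G₂ : SimpleGraph W} {H₁ : SimpleGraph V'}
    {H₂ : SimpleGraph W'} (e₁ : G₁ ≃g H₁) (e₂ : G₂ ≃g H₂) : G₁.boxProd G₂ ≃g H₁.boxProd H₂ where
  toEquiv := e₁.toEquiv.prodCongr e₂.toEquiv
  map_rel_iff' := by
    rintro ⟨a₁, a₂⟩ ⟨b₁, b₂⟩
    simp [boxProd_adj, e₁.map_rel_iff, e₂.map_rel_iff, EmbeddingLike.apply_eq_iff_eq]

lemma Preconnected.eq_top_of_fin_two {G : SimpleGraph (Fin 2)} (h : G.Preconnected) : G = ⊤ := by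
  obtain ⟨u, hu⟩ := h.exists_adj_of_nontrivial 0
  fin_cases u
  · exact absurd rfl hu.ne
  · replace hu : G.Adj 0 1 := hu
    ext x y
    fin_cases x <;> fin_cases y <;> simp [hu, hu.symm]

lemma exists_iso_of_card_eq [Fintype W] (X : SimpleGraph W) {m : ℕ}
    (h : Fintype.card W = m) : ∃ U : SimpleGraph (Fin m), Nonempty (U ≃g X) :=
  ⟨_, ⟨(Iso.map (Fintype.equivFinOfCardEq h) X).symm⟩⟩

/-- `s` is a union of connected components. -/
def IsAdjClosed (G : SimpleGraph V) (s : Set V) : Prop :=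
  ∀ ⦃x y⦄, G.Adj x y → x ∈ s → y ∈ s

section Restriction

variable {G : SimpleGraph V} {G' : SimpleGraph V'} {H : SimpleGraph W} {H' : SimpleGraph W'}

lemma Preconnected.apply_mem_of_isAdjClosed {K : SimpleGraph κ} (hK : K.Preconnected)
    (f : K →g G) {s : Set V} (hs : G.IsAdjClosed s) {k₀ : κ} (h₀ : f k₀ ∈ s) (k : κ) :
    f k ∈ s := by
  obtain ⟨p⟩ := hK k₀ k
  induction p with
  | nil => exact h₀
  | cons h _ ih => exact ih (hs (f.map_adj h) h₀)

lemma Iso.nonempty_iso_of_bijOn_range (Φ : H ≃g H') {e : G ↪g H} {e' : G' ↪g H'}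
    (h : Set.BijOn Φ (Set.range e) (Set.range e')) : Nonempty (G ≃g G') :=
  ⟨(e.isoInduceRange.trans (Φ.induce h)).trans e'.isoInduceRange.symm⟩

lemma Iso.bijOn_range_of_isAdjClosed (Φ : H ≃g H') {e : G ↪g H} {e' : G' ↪g H'}
    (hG : G.Preconnected) (hG' : G'.Preconnected) (hs : H.IsAdjClosed (Set.range e))
    (hs' : H'.IsAdjClosed (Set.range e')) {v₀ : V} (h₀ : Φ (e v₀) ∈ Set.range e') :
    Set.BijOn Φ (Set.range e) (Set.range e') := by
  obtain ⟨u₀, hu₀⟩ := h₀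
  have hback : Φ.symm (e' u₀) ∈ Set.range e := ⟨v₀, by simp [hu₀]⟩
  refine Set.InvOn.bijOn (f' := Φ.symm) ⟨fun _ _ => by simp, fun _ _ => by simp⟩ ?_ ?_
  · rintro _ ⟨v, rfl⟩
    exact hG.apply_mem_of_isAdjClosed (Φ.toHom.comp e.toHom) hs' (k₀ := v₀) ⟨u₀, hu₀⟩ v
  · rintro _ ⟨u, rfl⟩
    exact hG'.apply_mem_of_isAdjClosed (Φ.symm.toHom.comp e'.toHom) hs hback u

end Restriction

section PaddedSum

variable {α β γ : Type*} (A : SimpleGraph α) (B : SimpleGraph β) (γ)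

abbrev paddedSum : SimpleGraph ((α ⊕ β) ⊕ γ) := (A ⊕g B) ⊕g ⊥

def paddedInl : A ↪g paddedSum A B γ := Embedding.sumInl.comp Embedding.sumInl

def paddedInr : B ↪g paddedSum A B γ := Embedding.sumInl.comp Embedding.sumInr

def paddedSwap : paddedSum A B γ ≃g paddedSum B A γ := Iso.sumCongr Iso.sumComm Iso.refl

variable {A B γ}

@[simp] lemma paddedInl_apply (a : α) : paddedInl A B γ a = Sum.inl (Sum.inl a) := rfl

@[simp] lemma paddedInr_apply (b : β) : paddedInr A B γ b = Sum.inl (Sum.inr b) := rfl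

@[simp] lemma paddedSwap_apply_paddedInr (b : β) :
    paddedSwap A B γ (paddedInr A B γ b) = paddedInl B A γ b := rfl

lemma isAdjClosed_range_paddedInl :
    (paddedSum A B γ).IsAdjClosed (Set.range (paddedInl A B γ)) := by
  rintro x ((y | y) | y) hxy ⟨a, rfl⟩ <;> simp_all

lemma isAdjClosed_range_paddedInr :
    (paddedSum A B γ).IsAdjClosed (Set.range (paddedInr A B γ)) := by
  rintro x ((y | y) | y) hxy ⟨b, rfl⟩ <;> simp_all

lemma mem_range_paddedInl_or_paddedInr_of_adj {x y : (α ⊕ β) ⊕ γ}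
    (h : (paddedSum A B γ).Adj x y) :
    x ∈ Set.range (paddedInl A B γ) ∨ x ∈ Set.range (paddedInr A B γ) := by
  rcases x with (a | b) | c <;> rcases y with (_ | _) | _ <;> simp_all

variable {α' β' γ' : Type*} {A' : SimpleGraph α'} {B' : SimpleGraph β'}

lemma nonempty_iso_and_nonempty_iso_of_paddedSum_iso [Nontrivial β]
    (hA : A.Preconnected) (hB : B.Preconnected) (hA' : A'.Preconnected) (hB' : B'.Preconnected)
    (Φ : paddedSum A B γ ≃g paddedSum A' B' γ') {a₀ : α}
    (h₀ : Φ (paddedInl A B γ a₀) ∈ Set.range (paddedInl A' B' γ')) :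
    Nonempty (A ≃g A') ∧ Nonempty (B ≃g B') := by
  have hAA' := Φ.bijOn_range_of_isAdjClosed hA hA' isAdjClosed_range_paddedInl
    isAdjClosed_range_paddedInl h₀
  refine ⟨Φ.nonempty_iso_of_bijOn_range hAA', ?_⟩
  obtain ⟨b₀⟩ := (inferInstance : Nonempty β)
  obtain ⟨b₁, hb⟩ := hB.exists_adj_of_nontrivial b₀
  have hb₀ : Φ (paddedInr A B γ b₀) ∉ Set.range (paddedInl A' B' γ') := fun h => by
    obtain ⟨x, hx, hΦx⟩ := hAA'.surjOn h
    obtain ⟨a, ha⟩ := Φ.injective hΦx ▸ hx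
    simp at ha
  obtain h | h := mem_range_paddedInl_or_paddedInr_of_adj
    (Φ.map_adj_iff.2 ((paddedInr A B γ).map_adj_iff.2 hb))
  · exact absurd h hb₀
  · exact Φ.nonempty_iso_of_bijOn_range (Φ.bijOn_range_of_isAdjClosed hB hB'
      isAdjClosed_range_paddedInr isAdjClosed_range_paddedInr h)

theorem nonempty_boxProd_iso_of_paddedSum_iso [Nontrivial α] [Nontrivial β]
    (hA : A.Preconnected) (hB : B.Preconnected) (hA' : A'.Preconnected) (hB' : B'.Preconnected)
    (Φ : paddedSum A B γ ≃g paddedSum A' B' γ') : Nonempty (A.boxProd B ≃g A'.boxProd B') := by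
  obtain ⟨a₀⟩ := (inferInstance : Nonempty α)
  obtain ⟨a₁, ha⟩ := hA.exists_adj_of_nontrivial a₀
  obtain h | ⟨u, hu⟩ := mem_range_paddedInl_or_paddedInr_of_adj
    (Φ.map_adj_iff.2 ((paddedInl A B γ).map_adj_iff.2 ha))
  · obtain ⟨⟨e₁⟩, ⟨e₂⟩⟩ := nonempty_iso_and_nonempty_iso_of_paddedSum_iso hA hB hA' hB' Φ h
    exact ⟨e₁.boxProdCongr e₂⟩
  · obtain ⟨⟨e₁⟩, ⟨e₂⟩⟩ := nonempty_iso_and_nonempty_iso_of_paddedSum_iso hA hB hB' hA'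
      (Φ.trans (paddedSwap A' B' γ')) (a₀ := a₀)
      ⟨u, by rw [RelIso.trans_apply, ← hu, paddedSwap_apply_paddedInr]⟩
    exact ⟨(e₁.boxProdCongr e₂).trans (boxProdComm _ _)⟩

end PaddedSum

end SimpleGraph

lemma Nat.card_quot_le_card_of_code {T Q : Type*} [Finite Q] (r : T → T → Prop)
    (code : T → Q → Prop) (hcode : ∀ t, ∃ q, code t q)
    (hdet : ∀ t t' q, code t q → code t' q → r t t') :
    Nat.card (Quot r) ≤ Nat.card Q := by
  choose f hf using hcode
  refine Nat.card_le_card_of_injective (fun x => f x.out) fun x y hxy => ?_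
  have hy := hf y.out
  rw [← show f x.out = f y.out from hxy] at hy
  rw [← x.out_eq, ← y.out_eq]
  exact Quot.sound (hdet _ _ _ (hf _) hy)

lemma add_le_mul_div_three_add_three {a b : ℕ} (ha : 3 ≤ a) (hb : 3 ≤ b) :
    a + b ≤ a * b / 3 + 3 := by
  have : 3 * (a + b) ≤ a * b + 9 := by nlinarith
  omega

def IsPaddedFactorCode {n m : ℕ} (G : SimpleGraph (Fin n)) (U : SimpleGraph (Fin m)) : Prop :=
  ∃ (a b k : ℕ) (A : SimpleGraph (Fin a)) (B : SimpleGraph (Fin b)), 2 ≤ a ∧ 2 ≤ b ∧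
    A.Preconnected ∧ B.Preconnected ∧ Nonempty (G ≃g A.boxProd B) ∧
    Nonempty (U ≃g paddedSum A B (Fin k))

lemma IsPaddedFactorCode.nonempty_iso {n m : ℕ} {G G' : SimpleGraph (Fin n)}
    {U U' : SimpleGraph (Fin m)} (hG : IsPaddedFactorCode G U) (hG' : IsPaddedFactorCode G' U')
    (hU : Nonempty (U ≃g U')) : Nonempty (G ≃g G') := by
  obtain ⟨a, b, k, A, B, ha, hb, hA, hB, ⟨φ⟩, ⟨ψ⟩⟩ := hG
  obtain ⟨a', b', k', A', B', -, -, hA', hB', ⟨φ'⟩, ⟨ψ'⟩⟩ := hG'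
  obtain ⟨χ⟩ := hU
  have := Fin.nontrivial_iff_two_le.2 ha
  have := Fin.nontrivial_iff_two_le.2 hb
  obtain ⟨e⟩ := nonempty_boxProd_iso_of_paddedSum_iso hA hB hA' hB' ((ψ.symm.trans χ).trans ψ')
  exact ⟨(φ.trans e).trans φ'.symm⟩

lemma exists_isPaddedFactorCode {n a b : ℕ} {G : SimpleGraph (Fin n)} {A : SimpleGraph (Fin a)}
    {B : SimpleGraph (Fin b)} (ha : 3 ≤ a) (hb : 3 ≤ b) (hA : A.Preconnected)
    (hB : B.Preconnected) (φ : G ≃g A.boxProd B) :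
    ∃ U : SimpleGraph (Fin (n / 3 + 3)), IsPaddedFactorCode G U := by
  have hn : n = a * b := by simpa using Fintype.card_congr φ.toEquiv
  have hab := add_le_mul_div_three_add_three ha hb
  obtain ⟨U, hU⟩ := (paddedSum A B (Fin (n / 3 + 3 - (a + b)))).exists_iso_of_card_eq
    (m := n / 3 + 3) (by simp; omega)
  exact ⟨U, a, b, _, A, B, by omega, by omega, hA, hB, ⟨φ⟩, hU⟩

abbrev GraphCode (n : ℕ) : Type :=
  Quot (fun G H : {G : SimpleGraph (Fin n) // G.Connected ∧ IsCartPrime G} =>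
      Nonempty (G.1 ≃g H.1)) ⊕
    (Quot (fun G H : SimpleGraph (Fin (n / 2)) => Nonempty (G ≃g H)) ⊕
      Quot (fun G H : SimpleGraph (Fin (n / 3 + 3)) => Nonempty (G ≃g H)))

def IsGraphCode {n : ℕ} (G : SimpleGraph (Fin n)) (q : GraphCode n) : Prop :=
  (∃ h : G.Connected ∧ IsCartPrime G, q = .inl (Quot.mk _ ⟨G, h⟩)) ∨
  (∃ H : SimpleGraph (Fin (n / 2)), Nonempty (G ≃g (⊤ : SimpleGraph (Fin 2)).boxProd H) ∧
    q = .inr (.inl (Quot.mk _ H))) ∨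
  (∃ U : SimpleGraph (Fin (n / 3 + 3)), IsPaddedFactorCode G U ∧ q = .inr (.inr (Quot.mk _ U)))

lemma IsGraphCode.nonempty_iso {n : ℕ} {G G' : SimpleGraph (Fin n)} {q : GraphCode n}
    (h : IsGraphCode G q) (h' : IsGraphCode G' q) : Nonempty (G ≃g G') := by
  rcases h with ⟨hG, rfl⟩ | ⟨H, ⟨φ⟩, rfl⟩ | ⟨U, hU, rfl⟩ <;>
    rcases h' with ⟨hG', hq⟩ | ⟨H', ⟨φ'⟩, hq⟩ | ⟨U', hU', hq⟩ <;>
    simp only [reduceCtorEq, Sum.inl.injEq, Sum.inr.injEq] at hq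
  · exact ((equivalence_nonempty_iso.comap Subtype.val).quot_mk_eq_iff _ _).1 hq
  · obtain ⟨ψ⟩ := (equivalence_nonempty_iso.quot_mk_eq_iff _ _).1 hq
    exact ⟨(φ.trans (Iso.refl.boxProdCongr ψ)).trans φ'.symm⟩
  · exact hU.nonempty_iso hU' ((equivalence_nonempty_iso.quot_mk_eq_iff _ _).1 hq)

lemma exists_isGraphCode {n : ℕ} (hn : 2 ≤ n) {G : SimpleGraph (Fin n)} (hG : G.Connected) :
    ∃ q, IsGraphCode G q := by
  by_cases hp : IsCartPrime G
  · exact ⟨_, .inl ⟨⟨hG, hp⟩, rfl⟩⟩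
  obtain ⟨a, b, A, B, ha, hb, ⟨φ⟩⟩ := of_not_not (not_and.1 hp hn)
  have hn : n = a * b := by simpa using Fintype.card_congr φ.toEquiv
  obtain ⟨hA, hB⟩ := connected_boxProd.1 (φ.connected_iff.1 hG)
  rcases ha.eq_or_lt with rfl | ha
  · obtain rfl : b = n / 2 := by omega
    rw [hA.preconnected.eq_top_of_fin_two] at φ
    exact ⟨_, .inr (.inl ⟨B, ⟨φ⟩, rfl⟩)⟩
  rcases hb.eq_or_lt with rfl | hb
  · obtain rfl : a = n / 2 := by omega
    rw [hB.preconnected.eq_top_of_fin_two] at φ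
    exact ⟨_, .inr (.inl ⟨A, ⟨φ.trans (boxProdComm _ _)⟩, rfl⟩)⟩
  obtain ⟨U, hU⟩ := exists_isPaddedFactorCode ha hb hA.preconnected hB.preconnected φ
  exact ⟨_, .inr (.inr ⟨U, hU, rfl⟩)⟩

/-- In the arithmetical semiring of finite simple unlabeled graphs, for all sufficiently
large `n`: `G⁺(n) − G□(n) ≤ G(⌊n/2⌋) + G(⌊n/3⌋ + 3)`.
(Stated additively to avoid truncated subtraction.) -/
theorem stmt_11 : ∃ N : ℕ, ∀ n ≥ N,
    connCount n ≤ primeCount n + (graphCount (n / 2) + graphCount (n / 3 + 3)) := by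
  refine ⟨2, fun n hn => ?_⟩
  calc connCount n ≤ Nat.card (GraphCode n) :=
        Nat.card_quot_le_card_of_code _ (fun G => IsGraphCode G.1)
          (fun G => exists_isGraphCode hn G.2) fun _ _ _ h h' => h.nonempty_iso h'
    _ = primeCount n + (graphCount (n / 2) + graphCount (n / 3 + 3)) := by
        rw [Nat.card_sum, Nat.card_sum]; rfl
end

section
/- Let (S,+,□,∂) be an arithmetical semiring satisfying axioms G₁⁺ (S(n) − S⁺(n) = o(S⁺(n))) and G₂⁺ (S⁺(n−1) = o(S⁺(n))), with S⁺(n) > 0 for large n. Then axiom G₂□ holds: S□(⌊n/2⌋) = o(S□(n)). -/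
open Asymptotics Filter

section Aux

variable {S : Type*}

lemma degs_finite (deg : S → ℕ) (hfib : ∀ n : ℕ, {x : S | deg x = n}.Finite)
    (Ks : Finset ℕ) : {x : S | deg x ∈ Ks}.Finite := by
  have hsub : {x : S | deg x ∈ Ks} ⊆ ⋃ k ∈ (Ks : Set ℕ), {x : S | deg x = k} := by
    intro x hx; exact Set.mem_biUnion hx rfl
  exact ((Ks.finite_toSet).biUnion fun k _ => hfib k).subset hsub

lemma degs_ncard_le (deg : S → ℕ) (hfib : ∀ n : ℕ, {x : S | deg x = n}.Finite)
    (Ks : Finset ℕ) : {x : S | deg x ∈ Ks}.ncard ≤ ∑ k ∈ Ks, cntAll deg k := by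
  classical
  induction Ks using Finset.induction_on with
  | empty => simp
  | @insert a s ha ih =>
    have hset : {x : S | deg x ∈ insert a s} = {x : S | deg x = a} ∪ {x : S | deg x ∈ s} := by
      ext x; simp
    rw [hset, Finset.sum_insert ha]
    refine le_trans (Set.ncard_union_le _ _) ?_
    exact add_le_add (le_of_eq (Nat.card_coe_set_eq _).symm) ih

open Classical in
noncomputable def fpair [CommSemiring S] (Sp : Set S) (deg : S → ℕ) (x : S) : S :=
  if h : ∃ a, ∃ b, a ∈ Sp ∧ b ∈ Sp ∧ 2 ≤ deg a ∧ 2 ≤ deg b ∧ x = a * b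
  then h.choose + h.choose_spec.choose else 0

lemma fpair_spec [CommSemiring S] (Sp : Set S) (deg : S → ℕ) (x : S)
    (h : ∃ a, ∃ b, a ∈ Sp ∧ b ∈ Sp ∧ 2 ≤ deg a ∧ 2 ≤ deg b ∧ x = a * b) :
    ∃ a b : S, a ∈ Sp ∧ b ∈ Sp ∧ 2 ≤ deg a ∧ 2 ≤ deg b ∧ x = a * b ∧
      fpair Sp deg x = a + b := by
  obtain ⟨h1, h2, h3, h4, h5⟩ := h.choose_spec.choose_spec
  exact ⟨h.choose, h.choose_spec.choose, h1, h2, h3, h4, h5, by unfold fpair; rw [dif_pos h]⟩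

lemma geom_small (c : ℝ) (hc : 0 < c) :
    ∃ M : ℕ, ∀ m ≥ M, (4 * (m : ℝ) + 10) * (1/2 : ℝ) ^ m ≤ c := by
  have habs : |(1/2 : ℝ)| < 1 := by rw [abs_of_pos] <;> norm_num
  have h2 := tendsto_pow_const_mul_const_pow_of_abs_lt_one 1 habs
  have h3 := tendsto_pow_const_mul_const_pow_of_abs_lt_one 0 habs
  have hg : Filter.Tendsto (fun m : ℕ => (4 * (m : ℝ) + 10) * (1/2 : ℝ) ^ m)
      Filter.atTop (nhds 0) := by
    have h4 := (h2.const_mul (4:ℝ)).add (h3.const_mul (10:ℝ))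
    have h5 : (4:ℝ) * 0 + 10 * 0 = 0 := by norm_num
    rw [h5] at h4
    exact h4.congr (fun m => by push_cast; ring)
  have hev := hg.eventually_lt_const hc
  rw [Filter.eventually_atTop] at hev
  obtain ⟨M, hM⟩ := hev
  exact ⟨M, fun m hm => (hM m hm).le⟩

end Aux

/-- In an arithmetical semiring `(S, +, □, ∂)` (additive monoid free on the additive primes `Sp`,
multiplicative monoid of additive primes free on the multiplicative primes `Sq`, degree a
semiring homomorphism to `ℕ` with finite fibers, `∂⁻¹(0) = {0}` and `∂⁻¹(1) ∩ Sp = {1}`),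
satisfying axioms
`G₁⁺` (`S(n) − S⁺(n) = o(S⁺(n))`) and `G₂⁺` (`S⁺(n−1) = o(S⁺(n))`), with `S⁺(n) > 0` for
large `n`: axiom `G₂□` holds, i.e. `S□(⌊n/2⌋) = o(S□(n))`. -/
theorem stmt_19 {S : Type*} [CommSemiring S]
    (Sp Sq : Set S) (deg : S → ℕ)
    (hdeg_zero : deg 0 = 0) (hdeg_one : deg 1 = 1)
    (hdeg_add : ∀ x y : S, deg (x + y) = deg x + deg y)
    (hdeg_mul : ∀ x y : S, deg (x * y) = deg x * deg y)
    (hfiber0 : ∀ x : S, deg x = 0 ↔ x = 0)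
    (hfib : ∀ n : ℕ, {x : S | deg x = n}.Finite)
    (hadd_free : ∀ x : S, ∃! f : Sp →₀ ℕ, x = f.sum fun p n => n • (p : S))
    (hSqSp : Sq ⊆ Sp)
    (hone_mem : (1 : S) ∈ Sp)
    (hmul_mem : ∀ x ∈ Sp, ∀ y ∈ Sp, x * y ∈ Sp)
    (hmul_free : ∀ x ∈ Sp, ∃! f : Sq →₀ ℕ, x = f.prod fun q n => (q : S) ^ n)
    (hfiber1 : ∀ x ∈ Sp, (deg x = 1 ↔ x = 1))
    (hG1 : (fun n : ℕ => (cntAll deg n : ℝ) - cntIn deg Sp n)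
      =o[Filter.atTop] fun n : ℕ => (cntIn deg Sp n : ℝ))
    (hG2 : (fun n : ℕ => (cntIn deg Sp (n - 1) : ℝ))
      =o[Filter.atTop] fun n : ℕ => (cntIn deg Sp n : ℝ))
    (hpos : ∀ᶠ n : ℕ in Filter.atTop, 0 < cntIn deg Sp n) :
    (fun n : ℕ => (cntIn deg Sq (n / 2) : ℝ))
      =o[Filter.atTop] fun n : ℕ => (cntIn deg Sq n : ℝ) := by
  classical
  -- card representations
  have hPcard : ∀ n, cntIn deg Sp n = {x : S | deg x = n ∧ x ∈ Sp}.ncard :=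
    fun n => (Nat.card_coe_set_eq _)
  have hQcard : ∀ n, cntIn deg Sq n = {x : S | deg x = n ∧ x ∈ Sq}.ncard :=
    fun n => (Nat.card_coe_set_eq _)
  have hAcard : ∀ n, cntAll deg n = {x : S | deg x = n}.ncard :=
    fun n => (Nat.card_coe_set_eq _)
  have hfinP : ∀ n, {x : S | deg x = n ∧ x ∈ Sp}.Finite :=
    fun n => (hfib n).subset fun x hx => hx.1
  have hfinQ : ∀ n, {x : S | deg x = n ∧ x ∈ Sq}.Finite :=
    fun n => (hfib n).subset fun x hx => hx.1
  -- composite additive primes of degree n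
  set Cs : ℕ → Set S := fun n => {x : S | deg x = n ∧ x ∈ Sp ∧ x ∉ Sq} with hCs_def
  have hfinC : ∀ n, (Cs n).Finite := fun n => (hfib n).subset fun x hx => hx.1
  -- basic structural facts
  have h0Sp : (0 : S) ∉ Sp := by
    intro h0
    obtain ⟨f, -, hu⟩ := hadd_free 0
    have e1 : (0 : Sp →₀ ℕ) = f := hu 0 (by
      show (0 : S) = (0 : Sp →₀ ℕ).sum fun p n => n • (p : S)
      rw [Finsupp.sum_zero_index])
    have e2 : (Finsupp.single (⟨0, h0⟩ : Sp) 1 : Sp →₀ ℕ) = f := by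
      refine hu _ ?_
      show (0 : S) = (Finsupp.single (⟨0, h0⟩ : Sp) 1 : Sp →₀ ℕ).sum fun p n => n • (p : S)
      rw [Finsupp.sum_single_index (h := fun (p : Sp) (n : ℕ) => n • (p : S)) (zero_nsmul _), one_nsmul]
    have : (Finsupp.single (⟨0, h0⟩ : Sp) 1 : Sp →₀ ℕ) = 0 := e2.trans e1.symm
    have h10 : (1 : ℕ) = 0 := by simpa using DFunLike.congr_fun this ⟨0, h0⟩
    exact one_ne_zero h10
  have h1Sq : (1 : S) ∉ Sq := by
    intro h1
    obtain ⟨f, -, hu⟩ := hmul_free 1 hone_mem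
    have e1 : (0 : Sq →₀ ℕ) = f := hu 0 (by
      show (1 : S) = (0 : Sq →₀ ℕ).prod fun q n => (q : S) ^ n
      rw [Finsupp.prod_zero_index])
    have e2 : (Finsupp.single (⟨1, h1⟩ : Sq) 1 : Sq →₀ ℕ) = f := by
      refine hu _ ?_
      show (1 : S) = (Finsupp.single (⟨1, h1⟩ : Sq) 1 : Sq →₀ ℕ).prod fun q n => (q : S) ^ n
      rw [Finsupp.prod_single_index (h := fun (q : Sq) (n : ℕ) => (q : S) ^ n) (pow_zero _), pow_one]
    have : (Finsupp.single (⟨1, h1⟩ : Sq) 1 : Sq →₀ ℕ) = 0 := e2.trans e1.symm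
    have h10 : (1 : ℕ) = 0 := by simpa using DFunLike.congr_fun this ⟨1, h1⟩
    exact one_ne_zero h10
  have hdegq : ∀ q : S, q ∈ Sq → 2 ≤ deg q := by
    intro q hq
    match hd : deg q with
    | 0 => exact absurd (hSqSp hq) (by rw [(hfiber0 q).mp hd]; exact h0Sp)
    | 1 => exact absurd hq (by rw [(hfiber1 q (hSqSp hq)).mp hd]; exact h1Sq)
    | (k+2) => omega
  -- powers and products stay in Sp
  have hpow : ∀ y : S, y ∈ Sp → ∀ k : ℕ, y ^ k ∈ Sp := by
    intro y hy k
    induction k with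
    | zero => simpa using hone_mem
    | succ k ih => rw [pow_succ]; exact hmul_mem _ ih _ hy
  have hprodSp : ∀ g : Sq →₀ ℕ, g.prod (fun q n => (q : S) ^ n) ∈ Sp := by
    intro g
    refine Finset.prod_induction _ (· ∈ Sp) (fun a b ha hb => hmul_mem a ha b hb) hone_mem ?_
    intro q _
    exact hpow _ (hSqSp q.2) _
  -- factorization of composite additive primes
  have hfac : ∀ x : S, 2 ≤ deg x → x ∈ Sp → x ∉ Sq →
      ∃ a, ∃ b, a ∈ Sp ∧ b ∈ Sp ∧ 2 ≤ deg a ∧ 2 ≤ deg b ∧ x = a * b := by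
    intro x hdx hxp hxq
    obtain ⟨f, hf, -⟩ := hmul_free x hxp
    rcases Finset.eq_empty_or_nonempty f.support with hs | ⟨q, hq⟩
    · rw [Finsupp.support_eq_empty] at hs
      rw [hs, Finsupp.prod_zero_index] at hf
      rw [hf, hdeg_one] at hdx
      omega
    · have hfq : f q ≠ 0 := Finsupp.mem_support_iff.mp hq
      have hx' : x = (q : S) ^ (f q) * (f.erase q).prod (fun q n => (q : S) ^ n) := by
        calc x = f.prod (fun q n => (q : S) ^ n) := hf
          _ = ((Finsupp.single q (f q)) + f.erase q).prod (fun q n => (q : S) ^ n) := by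
              rw [Finsupp.single_add_erase]
          _ = (Finsupp.single q (f q)).prod (fun q n => (q : S) ^ n) *
              (f.erase q).prod (fun q n => (q : S) ^ n) :=
            Finsupp.prod_add_index' (fun a => pow_zero _) (fun a b c => pow_add _ _ _)
          _ = (q : S) ^ (f q) * (f.erase q).prod (fun q n => (q : S) ^ n) := by
              rw [Finsupp.prod_single_index (h := fun (q : Sq) (n : ℕ) => (q : S) ^ n) (pow_zero _)]
      set r : S := (f.erase q).prod (fun q n => (q : S) ^ n) with hr
      set b : S := (q : S) ^ (f q - 1) * r with hb
      have hxqb : x = (q : S) * b := by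
        rw [hx', hb]
        have : (q : S) ^ (f q) = (q : S) ^ (f q - 1) * q := by
          conv_lhs => rw [show f q = (f q - 1) + 1 by omega]
          rw [pow_succ]
        rw [this]; ring
      have hbp : b ∈ Sp := hmul_mem _ (hpow _ (hSqSp q.2) _) _ (hprodSp _)
      have hq2 : 2 ≤ deg (q : S) := hdegq _ q.2
      have hdb : deg x = deg (q : S) * deg b := by rw [hxqb, hdeg_mul]
      have hb2 : 2 ≤ deg b := by
        by_contra hlt
        push_neg at hlt
        have hcases : deg b = 0 ∨ deg b = 1 := by omega
        rcases hcases with h0 | h1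
        · rw [h0, Nat.mul_zero] at hdb; omega
        · have hb1 : b = 1 := (hfiber1 b hbp).mp h1
          rw [hb1, mul_one] at hxqb
          exact hxq (hxqb ▸ q.2)
      exact ⟨(q : S), b, hSqSp q.2, hbp, hq2, hb2, hxqb⟩
  -- uniqueness of pair sums
  have sum_pair : ∀ u v : Sp,
      ((Finsupp.single u 1 + Finsupp.single v 1 : Sp →₀ ℕ)).sum (fun p n => n • (p : S))
        = (u : S) + v := by
    intro u v
    rw [Finsupp.sum_add_index' (h := fun (p : Sp) (n : ℕ) => n • (p : S))
        (fun p => zero_nsmul ((p : S))) (fun p a b => add_nsmul (p : S) a b),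
      Finsupp.sum_single_index (h := fun (p : Sp) (n : ℕ) => n • (p : S)) (zero_nsmul _),
      Finsupp.sum_single_index (h := fun (p : Sp) (n : ℕ) => n • (p : S)) (zero_nsmul _),
      one_nsmul, one_nsmul]
  have hpair : ∀ u v u' v' : Sp,
      (Finsupp.single u 1 + Finsupp.single v 1 : Sp →₀ ℕ)
        = Finsupp.single u' 1 + Finsupp.single v' 1 →
      (u = u' ∧ v = v') ∨ (u = v' ∧ v = u') := by
    intro u v u' v' h1
    by_cases he : u = u'
    · left
      refine ⟨he, ?_⟩
      rw [he] at h1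
      have h2 : (Finsupp.single v 1 : Sp →₀ ℕ) = Finsupp.single v' 1 := add_left_cancel h1
      exact (Finsupp.single_left_inj one_ne_zero).mp h2
    · right
      have happ := DFunLike.congr_fun h1 u'
      have hv : v = u' := by
        by_contra hne
        simp only [Finsupp.add_apply, Finsupp.single_apply, if_neg he, if_neg hne,
          if_pos rfl] at happ
        split_ifs at happ <;> omega
      refine ⟨?_, hv⟩
      rw [hv] at h1
      have h2 : (Finsupp.single u 1 : Sp →₀ ℕ) = Finsupp.single v' 1 := by
        rw [add_comm (Finsupp.single u 1) (Finsupp.single u' 1)] at h1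
        exact add_left_cancel h1
      exact (Finsupp.single_left_inj one_ne_zero).mp h2
  have hpairmul : ∀ a b a' b' : S, a ∈ Sp → b ∈ Sp → a' ∈ Sp → b' ∈ Sp →
      a + b = a' + b' → a * b = a' * b' := by
    intro a b a' b' ha hb ha' hb' h
    obtain ⟨f, -, hu⟩ := hadd_free (a + b)
    have e1 : (Finsupp.single (⟨a, ha⟩ : Sp) 1 + Finsupp.single (⟨b, hb⟩ : Sp) 1 : Sp →₀ ℕ) = f :=
      hu _ (sum_pair ⟨a, ha⟩ ⟨b, hb⟩).symm
    have e2 : (Finsupp.single (⟨a', ha'⟩ : Sp) 1 + Finsupp.single (⟨b', hb'⟩ : Sp) 1 : Sp →₀ ℕ) = f :=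
      hu _ (by
        show a + b = _
        rw [sum_pair]; exact h)
    rcases hpair _ _ _ _ (e1.trans e2.symm) with ⟨h1, h2⟩ | ⟨h1, h2⟩
    · have ea : a = a' := congrArg Subtype.val h1
      have eb : b = b' := congrArg Subtype.val h2
      rw [ea, eb]
    · have ea : a = b' := congrArg Subtype.val h1
      have eb : b = a' := congrArg Subtype.val h2
      rw [ea, eb, mul_comm]
  -- counting inequalities
  have hQP : ∀ n, cntIn deg Sq n ≤ cntIn deg Sp n := by
    intro n
    rw [hQcard, hPcard]
    exact Set.ncard_le_ncard (fun x hx => ⟨hx.1, hSqSp hx.2⟩) (hfinP n)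
  have hPQC : ∀ n, cntIn deg Sp n ≤ cntIn deg Sq n + (Cs n).ncard := by
    intro n
    rw [hPcard, hQcard]
    refine le_trans (Set.ncard_le_ncard ?_ ((hfinQ n).union (hfinC n)))
      (Set.ncard_union_le _ _)
    intro x hx
    by_cases hq : x ∈ Sq
    · exact Or.inl ⟨hx.1, hq⟩
    · exact Or.inr ⟨hx.1, hx.2, hq⟩
  -- injectivity bound on composites
  set Ks : ℕ → Finset ℕ := fun n => (Finset.Icc 0 (n/2 + 2)).filter (fun k => 4*n ≤ k^2)
    with hKs_def
  have hCE : ∀ n, 2 ≤ n → (Cs n).ncard ≤ ∑ k ∈ Ks n, cntAll deg k := by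
    intro n hn
    refine le_trans
      (Set.ncard_le_ncard_of_injOn (fpair Sp deg) ?_ ?_ (degs_finite deg hfib (Ks n)))
      (degs_ncard_le deg hfib (Ks n))
    · intro x hx
      obtain ⟨hx1, hx2, hx3⟩ := hx
      obtain ⟨a, b, hap, hbp, ha2, hb2, hxab, hfx⟩ :=
        fpair_spec Sp deg x (hfac x (by omega) hx2 hx3)
      have hdm : deg a * deg b = n := by rw [← hx1, hxab, hdeg_mul]
      show deg (fpair Sp deg x) ∈ Ks n
      rw [hfx, hdeg_add, hKs_def]
      simp only [Finset.mem_filter, Finset.mem_Icc]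
      refine ⟨⟨Nat.zero_le _, ?_⟩, ?_⟩
      · have h1 : 2 * (deg a + deg b) ≤ deg a * deg b + 4 := by
          have hza : (2:ℤ) ≤ (deg a : ℤ) := by exact_mod_cast ha2
          have hzb : (2:ℤ) ≤ (deg b : ℤ) := by exact_mod_cast hb2
          have hz : 2 * ((deg a : ℤ) + (deg b : ℤ)) ≤ (deg a : ℤ) * (deg b : ℤ) + 4 := by
            nlinarith [mul_nonneg (by linarith : (0:ℤ) ≤ (deg a : ℤ) - 2)
              (by linarith : (0:ℤ) ≤ (deg b : ℤ) - 2)]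
          exact_mod_cast hz
        rw [hdm] at h1
        omega
      · have h : 4 * (deg a * deg b) ≤ (deg a + deg b)^2 := by
          have hz : (4:ℤ) * ((deg a : ℤ) * (deg b : ℤ)) ≤ ((deg a : ℤ) + (deg b : ℤ))^2 := by
            nlinarith [sq_nonneg ((deg a : ℤ) - (deg b : ℤ))]
          exact_mod_cast hz
        rw [hdm] at h
        exact h
    · intro x hx y hy hxy
      obtain ⟨a, b, hap, hbp, -, -, hxab, hfx⟩ :=
        fpair_spec Sp deg x (hfac x (by have h := hx.1; omega) hx.2.1 hx.2.2)
      obtain ⟨a', b', hap', hbp', -, -, hyab, hfy⟩ :=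
        fpair_spec Sp deg y (hfac y (by have h := hy.1; omega) hy.2.1 hy.2.2)
      rw [hfx, hfy] at hxy
      rw [hxab, hyab]
      exact hpairmul a b a' b' hap hbp hap' hbp' hxy
  -- quantitative hypotheses
  obtain ⟨N₁, hN₁⟩ := Filter.eventually_atTop.mp (hG1.def one_pos)
  obtain ⟨N₂, hN₂⟩ := Filter.eventually_atTop.mp (hG2.def one_half_pos)
  have hA2P : ∀ k, N₁ ≤ k → (cntAll deg k : ℝ) ≤ 2 * cntIn deg Sp k := by
    intro k hk
    have h1 := hN₁ k hk
    have habsP : |(cntIn deg Sp k : ℝ)| = (cntIn deg Sp k : ℝ) :=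
      abs_of_nonneg (Nat.cast_nonneg _)
    rw [Real.norm_eq_abs, Real.norm_eq_abs, one_mul, habsP] at h1
    have h2 := (abs_le.mp h1).2
    linarith
  have hhalf : ∀ k, N₂ ≤ k → (cntIn deg Sp (k - 1) : ℝ) ≤ 1/2 * cntIn deg Sp k := by
    intro k hk
    have h1 := hN₂ k hk
    rw [Real.norm_eq_abs, Real.norm_eq_abs, abs_of_nonneg (Nat.cast_nonneg (cntIn deg Sp (k-1))),
      abs_of_nonneg (Nat.cast_nonneg (cntIn deg Sp k))] at h1
    exact h1
  have hchain : ∀ m n : ℕ, N₂ ≤ m → m ≤ n →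
      (cntIn deg Sp m : ℝ) ≤ (1/2 : ℝ)^(n - m) * cntIn deg Sp n := by
    intro m n hm hmn
    induction n, hmn using Nat.le_induction with
    | base => simp
    | succ n hmn ih =>
      have h2 : (cntIn deg Sp n : ℝ) ≤ 1/2 * cntIn deg Sp (n+1) := by
        have := hhalf (n+1) (by omega)
        simpa using this
      calc (cntIn deg Sp m : ℝ) ≤ (1/2)^(n - m) * cntIn deg Sp n := ih
        _ ≤ (1/2)^(n - m) * (1/2 * cntIn deg Sp (n+1)) := by
            refine mul_le_mul_of_nonneg_left h2 (by positivity)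
        _ = (1/2)^(n + 1 - m) * cntIn deg Sp (n+1) := by
            rw [show n + 1 - m = (n - m) + 1 by omega, pow_succ]
            ring
  -- composite count is small
  obtain ⟨Mt, hMt⟩ := geom_small (1/2) (by norm_num)
  set NN := max N₁ N₂ with hNN_def
  have hCsmall : ∀ᶠ n : ℕ in Filter.atTop, ((Cs n).ncard : ℝ) ≤ 1/2 * cntIn deg Sp n := by
    filter_upwards [Filter.eventually_ge_atTop (max (max 12 (NN*NN)) (4*Mt))] with n hn
    have hn12 : 12 ≤ n := le_trans (le_trans (le_max_left _ _) (le_max_left _ _)) hn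
    have hnNN : NN*NN ≤ n := le_trans (le_trans (le_max_right _ _) (le_max_left _ _)) hn
    have hnMt : 4*Mt ≤ n := le_trans (le_max_right _ _) hn
    have hPnn : (0:ℝ) ≤ cntIn deg Sp n := Nat.cast_nonneg _
    have hk_bound : ∀ k ∈ Ks n,
        (cntAll deg k : ℝ) ≤ 2 * ((1/2 : ℝ)^(n/4) * cntIn deg Sp n) := by
      intro k hk
      rw [hKs_def] at hk
      simp only [Finset.mem_filter, Finset.mem_Icc] at hk
      obtain ⟨⟨-, hk2⟩, hk4⟩ := hk
      have hkNN : NN ≤ k := by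
        by_contra hlt
        push_neg at hlt
        have h1 : k * k ≤ NN * NN := Nat.mul_le_mul (le_of_lt hlt) (le_of_lt hlt)
        have h2 : 4 * n ≤ n := by
          calc 4 * n ≤ k ^ 2 := hk4
            _ = k * k := pow_two k
            _ ≤ NN * NN := h1
            _ ≤ n := hnNN
        omega
      have hkN1 : N₁ ≤ k := le_trans (le_max_left _ _) hkNN
      have hkN2 : N₂ ≤ k := le_trans (le_max_right _ _) hkNN
      have h1 : (cntAll deg k : ℝ) ≤ 2 * cntIn deg Sp k := hA2P k hkN1
      have h2 : (cntIn deg Sp k : ℝ) ≤ (1/2)^(n - k) * cntIn deg Sp n :=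
        hchain k n hkN2 (by omega)
      have h3 : ((1/2 : ℝ))^(n - k) ≤ (1/2 : ℝ)^(n/4) :=
        pow_le_pow_of_le_one (by norm_num) (by norm_num) (by omega)
      calc (cntAll deg k : ℝ) ≤ 2 * cntIn deg Sp k := h1
        _ ≤ 2 * ((1/2)^(n - k) * cntIn deg Sp n) := by linarith
        _ ≤ 2 * ((1/2)^(n/4) * cntIn deg Sp n) := by
            have := mul_le_mul_of_nonneg_right h3 hPnn
            linarith
    have hsumN : (Cs n).ncard ≤ ∑ k ∈ Ks n, cntAll deg k := hCE n (by omega)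
    have hsum : ((Cs n).ncard : ℝ) ≤ ∑ k ∈ Ks n, (cntAll deg k : ℝ) := by
      calc ((Cs n).ncard : ℝ) ≤ ((∑ k ∈ Ks n, cntAll deg k : ℕ) : ℝ) := Nat.cast_le.mpr hsumN
        _ = ∑ k ∈ Ks n, (cntAll deg k : ℝ) := by push_cast; rfl
    have hsum2 : (∑ k ∈ Ks n, (cntAll deg k : ℝ))
        ≤ (Ks n).card • (2 * ((1/2 : ℝ)^(n/4) * cntIn deg Sp n)) :=
      Finset.sum_le_card_nsmul _ _ _ hk_bound
    rw [nsmul_eq_mul] at hsum2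
    have hcard : (Ks n).card ≤ n/2 + 3 := by
      rw [hKs_def]
      refine le_trans (Finset.card_filter_le _ _) ?_
      rw [Nat.card_Icc]
      omega
    have hcard2 : 2 * (Ks n).card ≤ 4 * (n/4) + 10 := by omega
    have hcast : ((2 * (Ks n).card : ℕ) : ℝ) ≤ 4 * ((n/4 : ℕ) : ℝ) + 10 := by
      exact_mod_cast hcard2
    have hm : Mt ≤ n/4 := by omega
    have htail := hMt (n/4) hm
    have hpow_nonneg : (0:ℝ) ≤ (1/2 : ℝ)^(n/4) := by positivity
    calc ((Cs n).ncard : ℝ)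
        ≤ ((Ks n).card : ℝ) * (2 * ((1/2 : ℝ)^(n/4) * cntIn deg Sp n)) :=
          le_trans hsum hsum2
      _ = (((2 * (Ks n).card : ℕ) : ℝ) * (1/2 : ℝ)^(n/4)) * cntIn deg Sp n := by
          push_cast; ring
      _ ≤ ((4 * ((n/4 : ℕ) : ℝ) + 10) * (1/2 : ℝ)^(n/4)) * cntIn deg Sp n := by
          refine mul_le_mul_of_nonneg_right (mul_le_mul_of_nonneg_right hcast hpow_nonneg) hPnn
      _ ≤ 1/2 * cntIn deg Sp n := mul_le_mul_of_nonneg_right htail hPnn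
  -- P ≤ 2 Q eventually
  have hP2Q : ∀ᶠ n : ℕ in Filter.atTop, (cntIn deg Sp n : ℝ) ≤ 2 * cntIn deg Sq n := by
    filter_upwards [hCsmall] with n hC
    have h1 : (cntIn deg Sp n : ℝ) ≤ cntIn deg Sq n + ((Cs n).ncard : ℝ) := by
      exact_mod_cast Nat.cast_le.mpr (hPQC n)
    linarith
  -- conclusion
  rw [isLittleO_iff]
  intro c hc
  obtain ⟨Mc, hMc⟩ := geom_small c hc
  filter_upwards [hP2Q, Filter.eventually_ge_atTop (2*N₂ + 2*Mc + 2)] with n h2Q hn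
  have hm2 : N₂ ≤ n/2 := by omega
  have hchain2 : (cntIn deg Sp (n/2) : ℝ) ≤ (1/2 : ℝ)^(n - n/2) * cntIn deg Sp n :=
    hchain (n/2) n hm2 (by omega)
  have hQper : (cntIn deg Sq (n/2) : ℝ) ≤ cntIn deg Sp (n/2) := Nat.cast_le.mpr (hQP (n/2))
  have hcoef : 2 * (1/2 : ℝ)^(n - n/2) ≤ c := by
    have hmm : Mc ≤ n - n/2 := by omega
    have h1 := hMc (n - n/2) hmm
    have h2 : (2:ℝ) ≤ 4 * ((n - n/2 : ℕ) : ℝ) + 10 := by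
      have : (0:ℝ) ≤ ((n - n/2 : ℕ) : ℝ) := Nat.cast_nonneg _
      linarith
    have h3 : (0:ℝ) ≤ (1/2 : ℝ)^(n - n/2) := by positivity
    nlinarith
  rw [Real.norm_eq_abs, Real.norm_eq_abs, abs_of_nonneg (Nat.cast_nonneg (cntIn deg Sq (n/2))),
    abs_of_nonneg (Nat.cast_nonneg (cntIn deg Sq n))]
  calc (cntIn deg Sq (n/2) : ℝ) ≤ cntIn deg Sp (n/2) := hQper
    _ ≤ (1/2 : ℝ)^(n - n/2) * cntIn deg Sp n := hchain2
    _ ≤ (1/2 : ℝ)^(n - n/2) * (2 * cntIn deg Sq n) :=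
        mul_le_mul_of_nonneg_left h2Q (by positivity)
    _ = (2 * (1/2 : ℝ)^(n - n/2)) * cntIn deg Sq n := by ring
    _ ≤ c * cntIn deg Sq n := mul_le_mul_of_nonneg_right hcoef (Nat.cast_nonneg _)
end
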